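/- arXiv:1902.04692 — 11 statements merged into one kernel-verified Lean document; each statement's English description precedes it below -/
import Mathlib

section
/- Let s be a solution not containing item i, and assume v_max − ν·(W(s) + w_i) > 0. Then B(s ∪ {i}) ≥ B(s) if and only if W(s) ≤ w_{e_i}, and B(s ∪ {i}) > B(s) if and only if W(s) < w_{e_i}. -/
/-- Total weight of a solution (subset of items). -/
noncomputable def pwtW (w : ℕ → ℝ) (s : Finset ℕ) : ℝ := ∑ i ∈ s, w i

/-- Total profit of a solution. -/
noncomputable def pwtP (p : ℕ → ℝ) (s : Finset ℕ) : ℝ := ∑ i ∈ s, p i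

/-- Benefit of a solution: profit minus travel cost. -/
noncomputable def pwtB (w p : ℕ → ℝ) (R d vmax ν : ℝ) (s : Finset ℕ) : ℝ :=
  pwtP p s - R * d / (vmax - ν * pwtW w s)

/-- Threshold weight `w_{e_i}` of item `i`. -/
noncomputable def pwtThr (w p : ℕ → ℝ) (R d vmax ν : ℝ) (i : ℕ) : ℝ :=
  vmax / ν - w i / 2 * (1 + Real.sqrt (1 + 4 * R * d / (ν * w i * p i)))

/-!
Write `x = v_max − ν W(s)` and `a = ν w_i`. Adding item `i` changes the benefit by
`p_i − R d a / (x (x − a))`, whose sign is that of the quadratic `p_i x (x − a) − R d a` in `x`.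
Its roots are `a/2 · (1 ± t)` with `t = √(1 + 4 R d / (a p_i)) ≥ 1`, so the smaller root is
`≤ 0 < x` and the sign is that of `x − a/2 · (1 + t)`; dividing by `ν` turns this into `W(s)`
versus `w_{e_i}`.
-/

open Finset

section Quadratic

variable {a q K x : ℝ}

theorem mul_mul_sub_sub_mul_eq (ha : 0 < a) (hq : 0 < q) (hK : 0 ≤ K) :
    q * (x * (x - a)) - K * a =
      q * (x - a / 2 * (1 - √(1 + 4 * K / (a * q)))) *
        (x - a / 2 * (1 + √(1 + 4 * K / (a * q)))) := by
  have ht : √(1 + 4 * K / (a * q)) ^ 2 = 1 + 4 * K / (a * q) := Real.sq_sqrt (by positivity)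
  have hmul : 4 * K / (a * q) * (a * q) = 4 * K := div_mul_cancel₀ _ (by positivity)
  linear_combination (a ^ 2 * q / 4) * ht + a / 4 * hmul

theorem mul_sub_half_mul_one_sub_sqrt_pos (ha : 0 < a) (hq : 0 < q) (hK : 0 ≤ K) (hx : 0 < x) :
    0 < q * (x - a / 2 * (1 - √(1 + 4 * K / (a * q)))) := by
  have ht : 1 ≤ √(1 + 4 * K / (a * q)) :=
    Real.one_le_sqrt.mpr (le_add_of_nonneg_right (by positivity))
  have : a / 2 * (1 - √(1 + 4 * K / (a * q))) ≤ 0 :=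
    mul_nonpos_of_nonneg_of_nonpos (by positivity) (by linarith)
  exact mul_pos hq (by linarith)

theorem half_mul_one_add_sqrt_le_iff (ha : 0 < a) (hq : 0 < q) (hK : 0 ≤ K) (hx : 0 < x) :
    a / 2 * (1 + √(1 + 4 * K / (a * q))) ≤ x ↔ K * a ≤ q * (x * (x - a)) := by
  rw [← sub_nonneg, ← sub_nonneg (b := K * a), mul_mul_sub_sub_mul_eq ha hq hK,
    mul_nonneg_iff_of_pos_left (mul_sub_half_mul_one_sub_sqrt_pos ha hq hK hx)]

theorem half_mul_one_add_sqrt_lt_iff (ha : 0 < a) (hq : 0 < q) (hK : 0 ≤ K) (hx : 0 < x) :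
    a / 2 * (1 + √(1 + 4 * K / (a * q))) < x ↔ K * a < q * (x * (x - a)) := by
  rw [← sub_pos, ← sub_pos (b := K * a), mul_mul_sub_sub_mul_eq ha hq hK,
    mul_pos_iff_of_pos_left (mul_sub_half_mul_one_sub_sqrt_pos ha hq hK hx)]

end Quadratic

section Benefit

variable {w p : ℕ → ℝ} {R d vmax ν : ℝ} {s : Finset ℕ} {i : ℕ}

theorem pwtW_insert (his : i ∉ s) : pwtW w (insert i s) = pwtW w s + w i := by
  rw [pwtW, pwtW, sum_insert his, add_comm]

theorem pwtP_insert (his : i ∉ s) : pwtP p (insert i s) = pwtP p s + p i := by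
  rw [pwtP, pwtP, sum_insert his, add_comm]

theorem pwtB_insert_sub_pwtB (his : i ∉ s) (h₀ : vmax - ν * pwtW w s ≠ 0)
    (h₁ : vmax - ν * pwtW w s - ν * w i ≠ 0) :
    pwtB w p R d vmax ν (insert i s) - pwtB w p R d vmax ν s =
      p i - R * d * (ν * w i) /
        ((vmax - ν * pwtW w s) * (vmax - ν * pwtW w s - ν * w i)) := by
  have h₁' : vmax - ν * (pwtW w s + w i) = vmax - ν * pwtW w s - ν * w i := by ring
  rw [pwtB, pwtB, pwtW_insert his, pwtP_insert his, h₁']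
  field_simp
  ring

theorem le_pwtThr_iff (hν : 0 < ν) (W : ℝ) :
    W ≤ pwtThr w p R d vmax ν i ↔
      ν * w i / 2 * (1 + √(1 + 4 * (R * d) / (ν * w i * p i))) ≤ vmax - ν * W := by
  rw [pwtThr, ← mul_le_mul_iff_right₀ hν, mul_sub, mul_div_cancel₀ _ hν.ne',
    ← mul_assoc 4 R d, ← mul_assoc ν (w i / 2), ← mul_div_assoc]
  exact le_sub_comm

theorem lt_pwtThr_iff (hν : 0 < ν) (W : ℝ) :
    W < pwtThr w p R d vmax ν i ↔
      ν * w i / 2 * (1 + √(1 + 4 * (R * d) / (ν * w i * p i))) < vmax - ν * W := by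
  rw [pwtThr, ← mul_lt_mul_iff_right₀ hν, mul_sub, mul_div_cancel₀ _ hν.ne',
    ← mul_assoc 4 R d, ← mul_assoc ν (w i / 2), ← mul_div_assoc]
  exact lt_sub_comm

end Benefit

theorem pwt_add_benefit_iff_threshold_general
    (n : ℕ) (w p : ℕ → ℝ) (R d vmin vmax C ν : ℝ)
    (hw : ∀ j ∈ Finset.Icc 1 n, 0 < w j) (hp : ∀ j ∈ Finset.Icc 1 n, 0 < p j)
    (hR : 0 < R) (hd : 0 < d) (hv : vmin < vmax)
    (hC : 0 < C) (hν : ν = (vmax - vmin) / C)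
    (s : Finset ℕ)
    (i : ℕ) (hi : i ∈ Finset.Icc 1 n) (his : i ∉ s)
    (hpos : 0 < vmax - ν * (pwtW w s + w i)) :
    (pwtB w p R d vmax ν s ≤ pwtB w p R d vmax ν (insert i s) ↔
      pwtW w s ≤ pwtThr w p R d vmax ν i) ∧
    (pwtB w p R d vmax ν s < pwtB w p R d vmax ν (insert i s) ↔
      pwtW w s < pwtThr w p R d vmax ν i) := by
  have hν₀ : 0 < ν := hν ▸ div_pos (sub_pos.mpr hv) hC
  have hνw : 0 < ν * w i := mul_pos hν₀ (hw i hi)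
  have hRd : 0 ≤ R * d := (mul_pos hR hd).le
  set x := vmax - ν * pwtW w s
  have hxa : 0 < x - ν * w i := by linarith [mul_add ν (pwtW w s) (w i)]
  have hx : 0 < x := by linarith
  have hD : 0 < x * (x - ν * w i) := mul_pos hx hxa
  constructor
  · rw [← sub_nonneg, pwtB_insert_sub_pwtB his hx.ne' hxa.ne', sub_nonneg, div_le_iff₀ hD,
      le_pwtThr_iff hν₀, half_mul_one_add_sqrt_le_iff hνw (hp i hi) hRd hx]
  · rw [← sub_pos, pwtB_insert_sub_pwtB his hx.ne' hxa.ne', sub_pos, div_lt_iff₀ hD,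
      lt_pwtThr_iff hν₀, half_mul_one_add_sqrt_lt_iff hνw (hp i hi) hRd hx]

theorem pwt_add_benefit_iff_threshold
    (n : ℕ) (w p : ℕ → ℝ) (R d vmin vmax C ν : ℝ)
    (hw : ∀ j ∈ Finset.Icc 1 n, 0 < w j) (hp : ∀ j ∈ Finset.Icc 1 n, 0 < p j)
    (hR : 0 < R) (hd : 0 < d) (hvmin : 0 < vmin) (hv : vmin < vmax)
    (hC : 0 < C) (hν : ν = (vmax - vmin) / C)
    (s : Finset ℕ) (hs : s ⊆ Finset.Icc 1 n)
    (i : ℕ) (hi : i ∈ Finset.Icc 1 n) (his : i ∉ s)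
    (hpos : 0 < vmax - ν * (pwtW w s + w i)) :
    (pwtB w p R d vmax ν s ≤ pwtB w p R d vmax ν (insert i s) ↔
      pwtW w s ≤ pwtThr w p R d vmax ν i) ∧
    (pwtB w p R d vmax ν s < pwtB w p R d vmax ν (insert i s) ↔
      pwtW w s < pwtThr w p R d vmax ν i) :=
  pwt_add_benefit_iff_threshold_general n w p R d vmin vmax C ν hw hp hR hd hv hC hν s i hi his hpos
end

section
/- Let s be a solution containing item i, and assume v_max − ν·W(s) > 0. Then B(s \ {i}) ≥ B(s) if and only if W(s) ≥ w_{e_i} + w_i, and B(s \ {i}) > B(s) if and only if W(s) > w_{e_i} + w_i. -/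
theorem pwt_remove_benefit_iff_threshold
    (n : ℕ) (w p : ℕ → ℝ) (R d vmin vmax C ν : ℝ)
    (hw : ∀ j ∈ Finset.Icc 1 n, 0 < w j) (hp : ∀ j ∈ Finset.Icc 1 n, 0 < p j)
    (hR : 0 < R) (hd : 0 < d) (hvmin : 0 < vmin) (hv : vmin < vmax)
    (hC : 0 < C) (hν : ν = (vmax - vmin) / C)
    (s : Finset ℕ) (hs : s ⊆ Finset.Icc 1 n)
    (i : ℕ) (hi : i ∈ Finset.Icc 1 n) (his : i ∈ s)
    (hpos : 0 < vmax - ν * pwtW w s) :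
    (pwtB w p R d vmax ν s ≤ pwtB w p R d vmax ν (s.erase i) ↔
      pwtThr w p R d vmax ν i + w i ≤ pwtW w s) ∧
    (pwtB w p R d vmax ν s < pwtB w p R d vmax ν (s.erase i) ↔
      pwtThr w p R d vmax ν i + w i < pwtW w s) := by
  have hν0 : 0 < ν := by rw [hν]; exact div_pos (by linarith) hC
  have hwi : 0 < w i := hw i hi
  have hpi : 0 < p i := hp i hi
  have hWe : pwtW w (s.erase i) = pwtW w s - w i := by
    simp [pwtW, Finset.sum_erase_eq_sub his]
  have hPe : pwtP p (s.erase i) = pwtP p s - p i := by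
    simp [pwtP, Finset.sum_erase_eq_sub his]
  set W := pwtW w s with hW
  set a := vmax - ν * W with ha
  have hb : vmax - ν * (W - w i) = a + ν * w i := by rw [ha]; ring
  have hbpos : 0 < a + ν * w i := by positivity
  clear_value W a
  have hDnn : (0:ℝ) ≤ 1 + 4 * R * d / (ν * w i * p i) := by positivity
  set t := Real.sqrt (1 + 4 * R * d / (ν * w i * p i)) with ht
  have ht2 : t ^ 2 = 1 + 4 * R * d / (ν * w i * p i) := Real.sq_sqrt hDnn
  have ht0 : 0 ≤ t := Real.sqrt_nonneg _
  have hpos' : (0:ℝ) < 4 * R * d / (ν * w i * p i) := by positivity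
  have ht1 : 1 ≤ t := by nlinarith
  clear_value t
  have hRd : 4 * (R * d) = (t ^ 2 - 1) * (ν * w i * p i) := by
    rw [ht2]; field_simp; ring
  have hRd2 : 4 * (R * d * (ν * w i)) = (t ^ 2 - 1) * (ν * w i * p i) * (ν * w i) := by
    rw [show 4 * (R * d * (ν * w i)) = 4 * (R * d) * (ν * w i) by ring, hRd]
  have h4 : (0:ℝ) < a + ν * w i / 2 * (t + 1) := by
    have := mul_pos hν0 hwi; nlinarith
  have hsplit : R * d / a - R * d / (a + ν * w i)
      = R * d * (ν * w i) / (a * (a + ν * w i)) := by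
    field_simp; ring
  have hthr : pwtThr w p R d vmax ν i = vmax / ν - w i / 2 * (1 + t) := by rw [pwtThr, ht]
  have hfrac : ν * (vmax / ν) = vmax := mul_div_cancel₀ _ (ne_of_gt hν0)
  have hBs' : pwtB w p R d vmax ν (s.erase i)
      = pwtP p s - p i - R * d / (a + ν * w i) := by
    rw [pwtB, hPe, hWe, hb]
  have hBs : pwtB w p R d vmax ν s = pwtP p s - R * d / a := by rw [pwtB, ← hW, ← ha]
  -- threshold condition in terms of a (non-strict)
  have keyT : (vmax / ν - w i / 2 * (1 + t) + w i ≤ W) ↔ a ≤ ν * w i / 2 * (t - 1) := by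
    constructor
    · intro h
      have h' := mul_le_mul_of_nonneg_left h hν0.le
      rw [ha]
      linarith [hfrac, h']
    · intro h
      rw [ha] at h
      have : ν * (vmax / ν - w i / 2 * (1 + t) + w i) ≤ ν * W := by linarith [hfrac]
      exact le_of_mul_le_mul_left this hν0
  have keyT' : (vmax / ν - w i / 2 * (1 + t) + w i < W) ↔ a < ν * w i / 2 * (t - 1) := by
    constructor
    · intro h
      have h' := mul_lt_mul_of_pos_left h hν0
      rw [ha]
      linarith [hfrac, h']
    · intro h
      rw [ha] at h
      have : ν * (vmax / ν - w i / 2 * (1 + t) + w i) < ν * W := by linarith [hfrac]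
      exact lt_of_mul_lt_mul_left this hν0.le
  -- quadratic iff (non-strict)
  have keyQ : (p i * (a * (a + ν * w i)) ≤ R * d * (ν * w i)) ↔ a ≤ ν * w i / 2 * (t - 1) := by
    constructor
    · intro h2
      by_contra hcon
      push_neg at hcon
      have h5 : 0 < (a - ν * w i / 2 * (t - 1)) * (a + ν * w i / 2 * (t + 1)) :=
        mul_pos (by linarith) h4
      linarith [mul_pos hpi h5, hRd2]
    · intro h3
      have h6 : 0 ≤ p i * ((ν * w i / 2 * (t - 1) - a) * (a + ν * w i / 2 * (t + 1))) :=
        mul_nonneg hpi.le (mul_nonneg (by linarith) h4.le)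
      linarith [hRd2]
  have keyQ' : (p i * (a * (a + ν * w i)) < R * d * (ν * w i)) ↔ a < ν * w i / 2 * (t - 1) := by
    constructor
    · intro h2
      by_contra hcon
      push_neg at hcon
      have h5 : 0 ≤ (a - ν * w i / 2 * (t - 1)) * (a + ν * w i / 2 * (t + 1)) :=
        mul_nonneg (by linarith) h4.le
      linarith [mul_nonneg hpi.le h5, hRd2]
    · intro h3
      have h6 : 0 < p i * ((ν * w i / 2 * (t - 1) - a) * (a + ν * w i / 2 * (t + 1))) :=
        mul_pos hpi (mul_pos (by linarith) h4)
      linarith [hRd2]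
  constructor
  · rw [hBs, hBs', hthr, keyT, ← keyQ]
    constructor
    · intro h
      have h1 : p i ≤ R * d * (ν * w i) / (a * (a + ν * w i)) := by
        rw [← hsplit]; linarith
      rwa [le_div_iff₀ (by positivity)] at h1
    · intro h2
      have h1 : p i ≤ R * d * (ν * w i) / (a * (a + ν * w i)) := by
        rwa [le_div_iff₀ (by positivity)]
      rw [← hsplit] at h1; linarith
  · rw [hBs, hBs', hthr, keyT', ← keyQ']
    constructor
    · intro h
      have h1 : p i < R * d * (ν * w i) / (a * (a + ν * w i)) := by
        rw [← hsplit]; linarith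
      rwa [lt_div_iff₀ (by positivity)] at h1
    · intro h2
      have h1 : p i < R * d * (ν * w i) / (a * (a + ν * w i)) := by
        rwa [lt_div_iff₀ (by positivity)]
      rw [← hsplit] at h1; linarith
end

section
/- For any two items i and j with p_i ≥ p_j and w_i ≤ w_j, the thresholds satisfy w_{e_i} ≥ w_{e_j}. -/
lemma pwt_term_eq (R d ν w p : ℝ) (hw : 0 < w) (hp : 0 < p) (hν : 0 < ν) :
    w / 2 * (1 + Real.sqrt (1 + 4 * R * d / (ν * w * p)))
      = (w + Real.sqrt (w ^ 2 + 4 * R * d * w / (ν * p))) / 2 := by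
  have h1 : w ^ 2 + 4 * R * d * w / (ν * p)
      = w ^ 2 * (1 + 4 * R * d / (ν * w * p)) := by
    field_simp
  rw [h1, Real.sqrt_mul (sq_nonneg w), Real.sqrt_sq hw.le]
  ring

theorem pwt_threshold_monotone
    (n : ℕ) (w p : ℕ → ℝ) (R d vmin vmax C ν : ℝ)
    (hw : ∀ j ∈ Finset.Icc 1 n, 0 < w j) (hp : ∀ j ∈ Finset.Icc 1 n, 0 < p j)
    (hR : 0 < R) (hd : 0 < d) (hvmin : 0 < vmin) (hv : vmin < vmax)
    (hC : 0 < C) (hν : ν = (vmax - vmin) / C)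
    (i j : ℕ) (hi : i ∈ Finset.Icc 1 n) (hj : j ∈ Finset.Icc 1 n)
    (hpij : p j ≤ p i) (hwij : w i ≤ w j) :
    pwtThr w p R d vmax ν j ≤ pwtThr w p R d vmax ν i := by
  have hν0 : 0 < ν := by
    rw [hν]; exact div_pos (by linarith) hC
  have hwi := hw i hi
  have hwj := hw j hj
  have hpi := hp i hi
  have hpj := hp j hj
  unfold pwtThr
  rw [pwt_term_eq R d ν (w i) (p i) hwi hpi hν0,
      pwt_term_eq R d ν (w j) (p j) hwj hpj hν0]
  have key : w i ^ 2 + 4 * R * d * w i / (ν * p i)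
      ≤ w j ^ 2 + 4 * R * d * w j / (ν * p j) := by
    gcongr <;> first | positivity | exact mul_pos hν0 hpj
  gcongr
end

section
/- For any two items i and j with p_i > p_j and w_i < w_j, the thresholds satisfy w_{e_i} + w_i > w_{e_j} + w_j. -/
/-- The rewriting identity `w (1 - √(1+K/(wp))) = -(K/p)/(1+√(1+K/(wp)))`. -/
lemma pwt_aux_identity (K w q : ℝ) (hK : 0 < K) (hw : 0 < w) (hq : 0 < q) :
    w * (1 - Real.sqrt (1 + K / (w * q))) =
      -(K / q) / (1 + Real.sqrt (1 + K / (w * q))) := by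
  set s := Real.sqrt (1 + K / (w * q)) with hs
  have harg : (0:ℝ) ≤ 1 + K / (w * q) := by positivity
  have hs2 : s ^ 2 = 1 + K / (w * q) := Real.sq_sqrt harg
  have hsnn : 0 ≤ s := Real.sqrt_nonneg _
  have hden : (0:ℝ) < 1 + s := by linarith
  rw [eq_div_iff hden.ne']
  have : w * ((1 - s) * (1 + s)) = w * (1 - s ^ 2) := by ring
  have h2 : w * (1 - s ^ 2) = -(K / q) := by
    rw [hs2]; field_simp; ring
  nlinarith [h2, sq_nonneg s]

/-- Antitone in `w` for fixed profit. -/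
lemma pwt_aux_w (K q w1 w2 : ℝ) (hK : 0 < K) (hq : 0 < q)
    (hw1 : 0 < w1) (h12 : w1 < w2) :
    w2 * (1 - Real.sqrt (1 + K / (w2 * q))) <
      w1 * (1 - Real.sqrt (1 + K / (w1 * q))) := by
  have hw2 : 0 < w2 := hw1.trans h12
  rw [pwt_aux_identity K w1 q hK hw1 hq, pwt_aux_identity K w2 q hK hw2 hq]
  have hlt : K / (w2 * q) < K / (w1 * q) :=
    div_lt_div_of_pos_left hK (by positivity) (by nlinarith)
  have hslt : Real.sqrt (1 + K / (w2 * q)) < Real.sqrt (1 + K / (w1 * q)) :=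
    Real.sqrt_lt_sqrt (by positivity) (by linarith)
  have h2pos : (0:ℝ) < 1 + Real.sqrt (1 + K / (w2 * q)) := by
    have := Real.sqrt_nonneg (1 + K / (w2 * q)); linarith
  have hc : 0 < K / q := by positivity
  have hlt2 : 1 + Real.sqrt (1 + K / (w2 * q)) < 1 + Real.sqrt (1 + K / (w1 * q)) := by
    linarith
  have h := div_lt_div_of_pos_left hc h2pos hlt2
  rw [neg_div, neg_div]
  exact neg_lt_neg h

/-- Monotone in `p` for fixed weight. -/
lemma pwt_aux_p (K ww q1 q2 : ℝ) (hK : 0 < K) (hw : 0 < ww)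
    (hq1 : 0 < q1) (h12 : q1 < q2) :
    ww * (1 - Real.sqrt (1 + K / (ww * q1))) <
      ww * (1 - Real.sqrt (1 + K / (ww * q2))) := by
  have hq2 : 0 < q2 := hq1.trans h12
  have hlt : K / (ww * q2) < K / (ww * q1) :=
    div_lt_div_of_pos_left hK (by positivity) (by nlinarith)
  have hslt : Real.sqrt (1 + K / (ww * q2)) < Real.sqrt (1 + K / (ww * q1)) :=
    Real.sqrt_lt_sqrt (by positivity) (by linarith)
  nlinarith

theorem pwt_removal_threshold_strict_monotone
    (n : ℕ) (w p : ℕ → ℝ) (R d vmin vmax C ν : ℝ)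
    (hw : ∀ j ∈ Finset.Icc 1 n, 0 < w j) (hp : ∀ j ∈ Finset.Icc 1 n, 0 < p j)
    (hR : 0 < R) (hd : 0 < d) (hvmin : 0 < vmin) (hv : vmin < vmax)
    (hC : 0 < C) (hν : ν = (vmax - vmin) / C)
    (i j : ℕ) (hi : i ∈ Finset.Icc 1 n) (hj : j ∈ Finset.Icc 1 n)
    (hpij : p j < p i) (hwij : w i < w j) :
    pwtThr w p R d vmax ν j + w j < pwtThr w p R d vmax ν i + w i := by
  have hν0 : 0 < ν := by rw [hν]; exact div_pos (by linarith) hC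
  set K := 4 * R * d / ν with hKdef
  have hK : 0 < K := by rw [hKdef]; positivity
  have hwi := hw i hi
  have hwj := hw j hj
  have hpi := hp i hi
  have hpj := hp j hj
  have harg : ∀ a b : ℝ, 4 * R * d / (ν * a * b) = K / (a * b) := by
    intro a b
    rw [hKdef, div_div, mul_assoc ν a b]
  have key : w j * (1 - Real.sqrt (1 + K / (w j * p j))) <
      w i * (1 - Real.sqrt (1 + K / (w i * p i))) :=
    (pwt_aux_p K (w j) (p j) (p i) hK hwj hpj hpij).trans
      (pwt_aux_w K (p i) (w i) (w j) hK hpi hwi hwij)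
  unfold pwtThr
  rw [harg, harg]
  nlinarith [key]
end

section
/- Let s be any solution with exactly i items. Then P(s) ≤ P(s_i) and W(s) ≥ W(s_i); consequently, if v_max − ν·W(s) > 0, then B(s) ≤ B(s_i). -/
lemma pwt_key (n i : ℕ) (f : ℕ → ℝ) (s : Finset ℕ)
    (hs : s ⊆ Finset.Icc 1 n) (hcard : s.card = i)
    (hf : ∀ j k, 1 ≤ j → j ≤ k → k ≤ n → f k ≤ f j) :
    ∑ x ∈ s, f x ≤ ∑ x ∈ Finset.Icc 1 i, f x := by
  have hlt : ∀ m : ℕ, ∀ h : m < i, m + 1 ≤ s.orderEmbOfFin hcard ⟨m, h⟩ := by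
    intro m
    induction m with
    | zero =>
      intro h
      have := hs (s.orderEmbOfFin_mem hcard ⟨0, h⟩)
      simp at this; omega
    | succ j ih =>
      intro h
      have hj : j < i := by omega
      have hmono := (s.orderEmbOfFin hcard).strictMono
      have h2 : s.orderEmbOfFin hcard ⟨j, hj⟩ < s.orderEmbOfFin hcard ⟨j + 1, h⟩ :=
        hmono (by simp [Fin.lt_def])
      have := ih hj
      omega
  have hmem : ∀ k : Fin i, s.orderEmbOfFin hcard k ≤ n := by
    intro k
    have := hs (s.orderEmbOfFin_mem hcard k)
    simp at this; omega
  have h1 : ∑ x ∈ s, f x = ∑ k : Fin i, f (s.orderEmbOfFin hcard k) := by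
    rw [← Finset.sum_attach s f]
    exact (Fintype.sum_equiv (s.orderIsoOfFin hcard).toEquiv _ _ (fun k => rfl)).symm
  have h2 : ∑ x ∈ Finset.Icc 1 i, f x = ∑ k : Fin i, f (k + 1) := by
    rw [Fin.sum_univ_eq_sum_range (fun k => f (k + 1)) i]
    apply Finset.sum_nbij' (fun x => x - 1) (fun x => x + 1) <;>
      intro a ha <;> simp_all <;> omega
  rw [h1, h2]
  apply Finset.sum_le_sum
  intro k _
  exact hf (k + 1) _ (by omega) (hlt k k.isLt) (hmem k)

theorem pwt_prefix_dominates_same_size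
    (n : ℕ) (w p : ℕ → ℝ) (R d vmin vmax C ν : ℝ)
    (hw : ∀ j ∈ Finset.Icc 1 n, 0 < w j) (hp : ∀ j ∈ Finset.Icc 1 n, 0 < p j)
    (hR : 0 < R) (hd : 0 < d) (hvmin : 0 < vmin) (hv : vmin < vmax)
    (hC : 0 < C) (hν : ν = (vmax - vmin) / C)
    (hpm : ∀ i j, 1 ≤ i → i ≤ j → j ≤ n → p j ≤ p i)
    (hwm : ∀ i j, 1 ≤ i → i ≤ j → j ≤ n → w i ≤ w j)
    (i : ℕ) (hi : i ≤ n)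
    (s : Finset ℕ) (hs : s ⊆ Finset.Icc 1 n) (hcard : s.card = i) :
    pwtP p s ≤ pwtP p (Finset.Icc 1 i) ∧
    pwtW w (Finset.Icc 1 i) ≤ pwtW w s ∧
    (0 < vmax - ν * pwtW w s →
      pwtB w p R d vmax ν s ≤ pwtB w p R d vmax ν (Finset.Icc 1 i)) := by
  have hP : pwtP p s ≤ pwtP p (Finset.Icc 1 i) :=
    pwt_key n i p s hs hcard hpm
  have hW : pwtW w (Finset.Icc 1 i) ≤ pwtW w s := by
    have := pwt_key n i (fun j => -w j) s hs hcard
      (fun j k h1 h2 h3 => neg_le_neg (hwm j k h1 h2 h3))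
    simp only [Finset.sum_neg_distrib] at this
    unfold pwtW
    linarith
  refine ⟨hP, hW, fun hpos => ?_⟩
  have hν0 : 0 < ν := by rw [hν]; exact div_pos (by linarith) hC
  unfold pwtB
  have h3 : R * d / (vmax - ν * pwtW w (Finset.Icc 1 i)) ≤ R * d / (vmax - ν * pwtW w s) := by
    apply div_le_div_of_nonneg_left (by positivity) hpos
    nlinarith
  linarith
end

section
/- Assume v_max − ν·W(s_n) > 0 and that there exists an index i ∈ {0, ..., n−1} with W(s_i) ≥ w_{e_{i+1}}; let o be the least such index. Then the prefix benefits are unimodal: B(s_i) < B(s_{i+1}) for all 0 ≤ i < o, B(s_o) ≥ B(s_{o+1}), and B(s_i) > B(s_{i+1}) for all o < i ≤ n−1. -/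
-- core step lemma: strict increase
lemma pwt_keyA (w p R d vmax ν W : ℝ) (hw : 0 < w) (hp : 0 < p)
    (hR : 0 < R) (hd : 0 < d) (hν : 0 < ν)
    (hb : 0 < vmax - ν * (W + w))
    (hlt : W < vmax / ν - w / 2 * (1 + Real.sqrt (1 + 4 * R * d / (ν * w * p)))) :
    R * d / (vmax - ν * (W + w)) - R * d / (vmax - ν * W) < p := by
  set s := Real.sqrt (1 + 4 * R * d / (ν * w * p)) with hsdef
  have hm : 0 < ν * w * p := by positivity
  have harg : (0:ℝ) ≤ 1 + 4 * R * d / (ν * w * p) := by positivity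
  have hs0 : 0 ≤ s := Real.sqrt_nonneg _
  have hs2 : s ^ 2 = 1 + 4 * R * d / (ν * w * p) := Real.sq_sqrt harg
  have hs2' : s ^ 2 * (ν * w * p) = ν * w * p + 4 * R * d := by
    rw [hs2]; field_simp
  have hs1 : 1 ≤ s := by
    have h4 : (0:ℝ) ≤ 4 * R * d / (ν * w * p) := by positivity
    have h := Real.sqrt_le_sqrt (show (1:ℝ) ≤ 1 + 4 * R * d / (ν * w * p) by linarith)
    rw [Real.sqrt_one] at h
    rw [hsdef]; exact h
  have ha : 0 < vmax - ν * W := by nlinarith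
  have hx : ν * w / 2 * (1 + s) < vmax - ν * W := by
    have h := mul_lt_mul_of_pos_left hlt hν
    rw [mul_sub, mul_div_cancel₀ _ hν.ne'] at h
    nlinarith
  rw [div_sub_div _ _ hb.ne' ha.ne', div_lt_iff₀ (by positivity)]
  have h1 : 0 < (vmax - ν * W) - ν * w / 2 * (1 - s) := by nlinarith
  have h2 : 0 < (vmax - ν * W) - ν * w / 2 * (1 + s) := by linarith
  nlinarith [mul_pos (mul_pos hp h2) h1, hs2']

-- core step lemma: non-strict decrease
lemma pwt_keyB (w p R d vmax ν W : ℝ) (hw : 0 < w) (hp : 0 < p)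
    (hR : 0 < R) (hd : 0 < d) (hν : 0 < ν)
    (hb : 0 < vmax - ν * (W + w))
    (hge : vmax / ν - w / 2 * (1 + Real.sqrt (1 + 4 * R * d / (ν * w * p))) ≤ W) :
    p ≤ R * d / (vmax - ν * (W + w)) - R * d / (vmax - ν * W) := by
  set s := Real.sqrt (1 + 4 * R * d / (ν * w * p)) with hsdef
  have hm : 0 < ν * w * p := by positivity
  have harg : (0:ℝ) ≤ 1 + 4 * R * d / (ν * w * p) := by positivity
  have hs0 : 0 ≤ s := Real.sqrt_nonneg _
  have hs2 : s ^ 2 = 1 + 4 * R * d / (ν * w * p) := Real.sq_sqrt harg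
  have hs2' : s ^ 2 * (ν * w * p) = ν * w * p + 4 * R * d := by
    rw [hs2]; field_simp
  have hs1 : 1 ≤ s := by
    have h4 : (0:ℝ) ≤ 4 * R * d / (ν * w * p) := by positivity
    have h := Real.sqrt_le_sqrt (show (1:ℝ) ≤ 1 + 4 * R * d / (ν * w * p) by linarith)
    rw [Real.sqrt_one] at h
    rw [hsdef]; exact h
  have ha : 0 < vmax - ν * W := by nlinarith
  have hx : vmax - ν * W ≤ ν * w / 2 * (1 + s) := by
    have h := mul_le_mul_of_nonneg_left hge hν.le
    rw [mul_sub, mul_div_cancel₀ _ hν.ne'] at h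
    nlinarith
  rw [div_sub_div _ _ hb.ne' ha.ne', le_div_iff₀ (by positivity)]
  have h1 : 0 < (vmax - ν * W) - ν * w / 2 * (1 - s) := by nlinarith
  have h2 : (vmax - ν * W) - ν * w / 2 * (1 + s) ≤ 0 := by linarith
  nlinarith [mul_nonneg (mul_nonneg hp.le (neg_nonneg.2 h2)) h1.le, hs2']

-- core step lemma: strict decrease
lemma pwt_keyC (w p R d vmax ν W : ℝ) (hw : 0 < w) (hp : 0 < p)
    (hR : 0 < R) (hd : 0 < d) (hν : 0 < ν)
    (hb : 0 < vmax - ν * (W + w))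
    (hgt : vmax / ν - w / 2 * (1 + Real.sqrt (1 + 4 * R * d / (ν * w * p))) < W) :
    p < R * d / (vmax - ν * (W + w)) - R * d / (vmax - ν * W) := by
  set s := Real.sqrt (1 + 4 * R * d / (ν * w * p)) with hsdef
  have hm : 0 < ν * w * p := by positivity
  have harg : (0:ℝ) ≤ 1 + 4 * R * d / (ν * w * p) := by positivity
  have hs0 : 0 ≤ s := Real.sqrt_nonneg _
  have hs2 : s ^ 2 = 1 + 4 * R * d / (ν * w * p) := Real.sq_sqrt harg
  have hs2' : s ^ 2 * (ν * w * p) = ν * w * p + 4 * R * d := by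
    rw [hs2]; field_simp
  have hs1 : 1 ≤ s := by
    have h4 : (0:ℝ) ≤ 4 * R * d / (ν * w * p) := by positivity
    have h := Real.sqrt_le_sqrt (show (1:ℝ) ≤ 1 + 4 * R * d / (ν * w * p) by linarith)
    rw [Real.sqrt_one] at h
    rw [hsdef]; exact h
  have ha : 0 < vmax - ν * W := by nlinarith
  have hx : vmax - ν * W < ν * w / 2 * (1 + s) := by
    have h := mul_lt_mul_of_pos_left hgt hν
    rw [mul_sub, mul_div_cancel₀ _ hν.ne'] at h
    nlinarith
  rw [div_sub_div _ _ hb.ne' ha.ne', lt_div_iff₀ (by positivity)]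
  have h1 : 0 < (vmax - ν * W) - ν * w / 2 * (1 - s) := by nlinarith
  have h2 : (vmax - ν * W) - ν * w / 2 * (1 + s) < 0 := by linarith
  nlinarith [mul_pos (mul_pos hp (neg_pos.2 h2)) h1, hs2']

-- threshold strictly antitone
lemma pwt_thr_lt (w1 w2 p1 p2 R d vmax ν : ℝ) (hw1 : 0 < w1) (hw12 : w1 < w2)
    (hp2 : 0 < p2) (hp21 : p2 < p1) (hR : 0 < R) (hd : 0 < d) (hν : 0 < ν) :
    vmax / ν - w2 / 2 * (1 + Real.sqrt (1 + 4 * R * d / (ν * w2 * p2))) <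
      vmax / ν - w1 / 2 * (1 + Real.sqrt (1 + 4 * R * d / (ν * w1 * p1))) := by
  have hw2 : 0 < w2 := hw1.trans hw12
  have hp1 : 0 < p1 := hp2.trans hp21
  set s1 := Real.sqrt (1 + 4 * R * d / (ν * w1 * p1)) with hs1def
  set s2 := Real.sqrt (1 + 4 * R * d / (ν * w2 * p2)) with hs2def
  have hs10 : 0 ≤ s1 := Real.sqrt_nonneg _
  have hs20 : 0 ≤ s2 := Real.sqrt_nonneg _
  have hs1sq : s1 ^ 2 = 1 + 4 * R * d / (ν * w1 * p1) := Real.sq_sqrt (by positivity)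
  have hs2sq : s2 ^ 2 = 1 + 4 * R * d / (ν * w2 * p2) := Real.sq_sqrt (by positivity)
  have hs1' : s1 ^ 2 * (ν * w1 * p1) = ν * w1 * p1 + 4 * R * d := by rw [hs1sq]; field_simp
  have hs2' : s2 ^ 2 * (ν * w2 * p2) = ν * w2 * p2 + 4 * R * d := by rw [hs2sq]; field_simp
  have e1 : (w1 * s1) ^ 2 * (ν * p1 * p2) = (ν * w1 * p1 + 4 * R * d) * (w1 * p2) := by
    rw [← hs1']; ring
  have e2 : (w2 * s2) ^ 2 * (ν * p1 * p2) = (ν * w2 * p2 + 4 * R * d) * (w2 * p1) := by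
    rw [← hs2']; ring
  have hwp : w1 * p2 < w2 * p1 := by nlinarith
  have hsq : (w1 * s1) ^ 2 * (ν * p1 * p2) < (w2 * s2) ^ 2 * (ν * p1 * p2) := by
    rw [e1, e2]
    nlinarith [mul_pos (sub_pos.2 hw12) (by linarith : (0:ℝ) < w1 + w2),
      mul_pos (mul_pos hν hp1) hp2, mul_pos (mul_pos hR hd) (sub_pos.2 hwp)]
  have hsq2 : (w1 * s1) ^ 2 < (w2 * s2) ^ 2 :=
    lt_of_mul_lt_mul_right hsq (by positivity)
  have h : w1 * s1 < w2 * s2 :=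
    lt_of_pow_lt_pow_left₀ 2 (by positivity) hsq2
  nlinarith

theorem pwt_prefix_benefits_unimodal
    (n : ℕ) (w p : ℕ → ℝ) (R d vmin vmax C ν : ℝ)
    (hw : ∀ j ∈ Finset.Icc 1 n, 0 < w j) (hp : ∀ j ∈ Finset.Icc 1 n, 0 < p j)
    (hR : 0 < R) (hd : 0 < d) (hvmin : 0 < vmin) (hv : vmin < vmax)
    (hC : 0 < C) (hν : ν = (vmax - vmin) / C)
    (hpm : ∀ i j, 1 ≤ i → i < j → j ≤ n → p j < p i)
    (hwm : ∀ i j, 1 ≤ i → i < j → j ≤ n → w i < w j)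
    (hposn : 0 < vmax - ν * pwtW w (Finset.Icc 1 n))
    (o : ℕ) (ho : o < n)
    (hWo : pwtThr w p R d vmax ν (o + 1) ≤ pwtW w (Finset.Icc 1 o))
    (hleast : ∀ i < o, pwtW w (Finset.Icc 1 i) < pwtThr w p R d vmax ν (i + 1)) :
    (∀ i < o, pwtB w p R d vmax ν (Finset.Icc 1 i) <
        pwtB w p R d vmax ν (Finset.Icc 1 (i + 1))) ∧
    pwtB w p R d vmax ν (Finset.Icc 1 (o + 1)) ≤ pwtB w p R d vmax ν (Finset.Icc 1 o) ∧
    (∀ i, o < i → i < n → pwtB w p R d vmax ν (Finset.Icc 1 (i + 1)) <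
        pwtB w p R d vmax ν (Finset.Icc 1 i)) := by
  have hνpos : 0 < ν := by rw [hν]; exact div_pos (by linarith) hC
  have hWle : ∀ k, k ≤ n → pwtW w (Finset.Icc 1 k) ≤ pwtW w (Finset.Icc 1 n) := by
    intro k hk
    exact Finset.sum_le_sum_of_subset_of_nonneg
      (Finset.Icc_subset_Icc_right hk) (fun j hj _ => (hw j hj).le)
  have hpos : ∀ k, k ≤ n → 0 < vmax - ν * pwtW w (Finset.Icc 1 k) := by
    intro k hk
    have h1 := hWle k hk
    nlinarith
  have hsumW : ∀ i : ℕ, pwtW w (Finset.Icc 1 (i + 1)) = pwtW w (Finset.Icc 1 i) + w (i + 1) :=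
    fun i => Finset.sum_Icc_succ_top (Nat.le_add_left 1 i) w
  have hsumP : ∀ i : ℕ, pwtP p (Finset.Icc 1 (i + 1)) = pwtP p (Finset.Icc 1 i) + p (i + 1) :=
    fun i => Finset.sum_Icc_succ_top (Nat.le_add_left 1 i) p
  have hmem : ∀ i : ℕ, i + 1 ≤ n → i + 1 ∈ Finset.Icc 1 n := by
    intro i hi; exact Finset.mem_Icc.2 ⟨Nat.le_add_left 1 i, hi⟩
  have hbpos : ∀ i : ℕ, i + 1 ≤ n →
      0 < vmax - ν * (pwtW w (Finset.Icc 1 i) + w (i + 1)) := by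
    intro i hi; rw [← hsumW i]; exact hpos (i + 1) hi
  refine ⟨?_, ?_, ?_⟩
  · intro i hio
    have hi : i + 1 ≤ n := by omega
    have key := pwt_keyA (w (i + 1)) (p (i + 1)) R d vmax ν (pwtW w (Finset.Icc 1 i))
      (hw _ (hmem i hi)) (hp _ (hmem i hi)) hR hd hνpos (hbpos i hi) (hleast i hio)
    unfold pwtB
    rw [hsumP i, hsumW i]
    linarith
  · have hi : o + 1 ≤ n := ho
    have key := pwt_keyB (w (o + 1)) (p (o + 1)) R d vmax ν (pwtW w (Finset.Icc 1 o))
      (hw _ (hmem o hi)) (hp _ (hmem o hi)) hR hd hνpos (hbpos o hi) hWo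
    unfold pwtB
    rw [hsumP o, hsumW o]
    linarith
  · intro i hoi hin
    have hi : i + 1 ≤ n := hin
    have ho1 : o + 1 ≤ n := ho
    have hthr : pwtThr w p R d vmax ν (i + 1) < pwtThr w p R d vmax ν (o + 1) :=
      pwt_thr_lt (w (o + 1)) (w (i + 1)) (p (o + 1)) (p (i + 1)) R d vmax ν
        (hw _ (hmem o ho1)) (hwm (o + 1) (i + 1) (Nat.le_add_left 1 o) (by omega) hi)
        (hp _ (hmem i hi)) (hpm (o + 1) (i + 1) (Nat.le_add_left 1 o) (by omega) hi)
        hR hd hνpos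
    have hWgt : pwtW w (Finset.Icc 1 o) < pwtW w (Finset.Icc 1 i) := by
      have h1 : pwtW w (Finset.Icc 1 (o + 1)) ≤ pwtW w (Finset.Icc 1 i) := by
        refine Finset.sum_le_sum_of_subset_of_nonneg
          (Finset.Icc_subset_Icc_right hoi) (fun j hj _ => ?_)
        exact (hw j (Finset.Icc_subset_Icc_right hin.le hj)).le
      rw [hsumW o] at h1
      have := hw _ (hmem o ho1)
      linarith
    have key := pwt_keyC (w (i + 1)) (p (i + 1)) R d vmax ν (pwtW w (Finset.Icc 1 i))
      (hw _ (hmem i hi)) (hp _ (hmem i hi)) hR hd hνpos (hbpos i hi) (by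
        have : pwtThr w p R d vmax ν (i + 1) < pwtW w (Finset.Icc 1 i) := by linarith
        exact this)
    unfold pwtB
    rw [hsumP i, hsumW i]
    linarith
end

section
/- Assume v_max − ν·W(s_n) > 0 and that there exists an index i ∈ {0, ..., n−1} with W(s_i) ≥ w_{e_{i+1}}; let o be the least such index, and let k be the greatest index j ≤ o with W(s_j) ≤ C (k exists since W(s_0) = 0 ≤ C). Then s_k is an optimal feasible solution: every solution s with W(s) ≤ C satisfies B(s) ≤ B(s_k). -/
/-- Key algebraic lemma about the threshold root. -/
lemma pwt_key_s8 (wi pi R d ν : ℝ) (hwi : 0 < wi) (hpi : 0 < pi)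
    (hR : 0 < R) (hd : 0 < d) (hν : 0 < ν) :
    (∀ x : ℝ, ν * (wi / 2 * (1 + Real.sqrt (1 + 4 * R * d / (ν * wi * pi)))) ≤ x →
      ν * wi < x ∧ R * d / (x - ν * wi) - R * d / x ≤ pi) ∧
    (∀ x : ℝ, 0 < x - ν * wi →
      x ≤ ν * (wi / 2 * (1 + Real.sqrt (1 + 4 * R * d / (ν * wi * pi)))) →
      pi ≤ R * d / (x - ν * wi) - R * d / x) := by
  have ha : 0 < ν * wi := by positivity
  set a := ν * wi with ha_def
  have hc : 0 < 4 * R * d / (ν * wi * pi) := by positivity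
  set c := 4 * R * d / (ν * wi * pi) with hc_def
  set s := Real.sqrt (1 + c) with hs_def
  have hs0 : 0 ≤ s := Real.sqrt_nonneg _
  have hs2 : s ^ 2 = 1 + c := Real.sq_sqrt (by linarith)
  have hs1 : 1 < s := by nlinarith
  have hre : ν * (wi / 2 * (1 + s)) = a / 2 * (1 + s) := by rw [ha_def]; ring
  have har : a < a / 2 * (1 + s) := by nlinarith
  have hkey : pi * ((a / 2 * (1 + s)) * (a / 2 * (1 + s) - a)) = R * d * a := by
    have h1 : (a / 2 * (1 + s)) * (a / 2 * (1 + s) - a) = a ^ 2 / 4 * (s ^ 2 - 1) := by ring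
    rw [h1, hs2]
    have hca : c = 4 * R * d / (a * pi) := by rw [hc_def, ha_def]
    rw [hca]
    field_simp
    ring
  constructor
  · intro x hx
    rw [hre] at hx
    have hax : a < x := lt_of_lt_of_le har hx
    have hx0 : 0 < x := lt_trans ha hax
    have hxa : 0 < x - a := by linarith
    refine ⟨hax, ?_⟩
    have heq : R * d / (x - a) - R * d / x = R * d * a / (x * (x - a)) := by
      field_simp
      ring
    rw [heq, div_le_iff₀ (by positivity)]
    have hprod : 0 ≤ pi * ((x - a / 2 * (1 + s)) * (x + a / 2 * (1 + s) - a)) := by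
      apply mul_nonneg hpi.le
      apply mul_nonneg (by linarith) (by linarith)
    nlinarith [hkey, hprod]
  · intro x hxa hx
    rw [hre] at hx
    have hx0 : 0 < x := by linarith
    have heq : R * d / (x - a) - R * d / x = R * d * a / (x * (x - a)) := by
      field_simp
      ring
    rw [heq, le_div_iff₀ (by positivity)]
    have hprod : 0 ≤ pi * ((a / 2 * (1 + s) - x) * (x + a / 2 * (1 + s) - a)) := by
      apply mul_nonneg hpi.le
      apply mul_nonneg (by linarith) (by linarith)
    nlinarith [hkey, hprod]

/-- Rearrangement-type lemma: for a monotone function, the sum over the prefix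
`Icc 1 s.card` is at most the sum over any `s ⊆ Icc 1 n`. -/
lemma pwt_sum_prefix_le (n : ℕ) (v : ℕ → ℝ)
    (hmono : ∀ i j, 1 ≤ i → i ≤ j → j ≤ n → v i ≤ v j)
    (s : Finset ℕ) (hs : s ⊆ Finset.Icc 1 n) :
    ∑ j ∈ Finset.Icc 1 s.card, v j ≤ ∑ x ∈ s, v x := by
  set m := s.card with hm
  set f := s.orderEmbOfFin hm.symm with hf
  have hmem : ∀ i : Fin m, f i ∈ Finset.Icc 1 n := fun i => hs (s.orderEmbOfFin_mem hm.symm i)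
  have hlb : ∀ t : ℕ, ∀ ht : t < m, t + 1 ≤ f ⟨t, ht⟩ := by
    intro t
    induction t with
    | zero =>
      intro ht
      exact (Finset.mem_Icc.mp (hmem ⟨0, ht⟩)).1
    | succ t ih =>
      intro ht
      have h1 : t < m := Nat.lt_of_succ_lt ht
      have h2 : f ⟨t, h1⟩ < f ⟨t + 1, ht⟩ := by
        apply (s.orderEmbOfFin hm.symm).strictMono
        simp [Fin.lt_def]
      have := ih h1
      omega
  have hsum1 : ∑ x ∈ s, v x = ∑ i : Fin m, v (f i) := by
    refine (Finset.sum_bij (fun (i : Fin m) _ => f i) (fun i _ => s.orderEmbOfFin_mem hm.symm i)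
      ?_ ?_ (fun i _ => rfl)).symm
    · intro i _ j _ h
      exact (s.orderEmbOfFin hm.symm).injective h
    · intro b hb
      have : b ∈ Set.range f := by rw [hf, Finset.range_orderEmbOfFin]; exact hb
      obtain ⟨i, hi⟩ := this
      exact ⟨i, Finset.mem_univ i, hi⟩
  have hsum2 : ∀ M : ℕ, ∑ j ∈ Finset.Icc 1 M, v j = ∑ i ∈ Finset.range M, v (i + 1) := by
    intro M
    induction M with
    | zero => simp
    | succ M ih =>
      rw [Finset.sum_Icc_succ_top (by omega) v, Finset.sum_range_succ, ih]
  rw [hsum1, hsum2 m, ← Fin.sum_univ_eq_sum_range (fun i => v (i + 1)) m]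
  apply Finset.sum_le_sum
  intro i _
  have h1 := hlb i.1 i.2
  have h2 := Finset.mem_Icc.mp (hmem i)
  exact hmono ((i : ℕ) + 1) (f i) (by omega) (by simpa using h1) h2.2

/-- Step lemma A : adding the next item while below the threshold improves benefit. -/
lemma pwt_stepA (n : ℕ) (w p : ℕ → ℝ) (R d vmax ν : ℝ)
    (hw : ∀ j ∈ Finset.Icc 1 n, 0 < w j) (hp : ∀ j ∈ Finset.Icc 1 n, 0 < p j)
    (hR : 0 < R) (hd : 0 < d) (hν : 0 < ν) (i : ℕ) (hi : i < n)
    (hthr : pwtW w (Finset.Icc 1 i) ≤ pwtThr w p R d vmax ν (i + 1)) :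
    pwtB w p R d vmax ν (Finset.Icc 1 i) ≤ pwtB w p R d vmax ν (Finset.Icc 1 (i + 1)) := by
  have hmem : i + 1 ∈ Finset.Icc 1 n := Finset.mem_Icc.mpr ⟨by omega, by omega⟩
  have hwi := hw _ hmem
  have hpi := hp _ hmem
  have hWsucc : pwtW w (Finset.Icc 1 (i + 1)) = pwtW w (Finset.Icc 1 i) + w (i + 1) :=
    Finset.sum_Icc_succ_top (by omega) w
  have hPsucc : pwtP p (Finset.Icc 1 (i + 1)) = pwtP p (Finset.Icc 1 i) + p (i + 1) :=
    Finset.sum_Icc_succ_top (by omega) p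
  set x := vmax - ν * pwtW w (Finset.Icc 1 i) with hx_def
  have hxr : ν * (w (i+1) / 2 * (1 + Real.sqrt (1 + 4 * R * d / (ν * w (i+1) * p (i+1))))) ≤ x := by
    have h1 := mul_le_mul_of_nonneg_left hthr hν.le
    have h2 : ν * pwtThr w p R d vmax ν (i + 1)
        = vmax - ν * (w (i+1) / 2 * (1 + Real.sqrt (1 + 4 * R * d / (ν * w (i+1) * p (i+1))))) := by
      unfold pwtThr
      field_simp
    rw [h2] at h1
    rw [hx_def]
    linarith
  obtain ⟨h1, h2⟩ := (pwt_key_s8 (w (i+1)) (p (i+1)) R d ν hwi hpi hR hd hν).1 x hxr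
  unfold pwtB
  rw [hWsucc, hPsucc]
  have h3 : vmax - ν * (pwtW w (Finset.Icc 1 i) + w (i + 1)) = x - ν * w (i + 1) := by
    rw [hx_def]; ring
  rw [h3]
  have h4 : R * d / (vmax - ν * pwtW w (Finset.Icc 1 i)) = R * d / x := by rw [hx_def]
  rw [h4]
  linarith

/-- Step lemma B : adding the next item while above the threshold hurts benefit. -/
lemma pwt_stepB (n : ℕ) (w p : ℕ → ℝ) (R d vmax ν : ℝ)
    (hw : ∀ j ∈ Finset.Icc 1 n, 0 < w j) (hp : ∀ j ∈ Finset.Icc 1 n, 0 < p j)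
    (hR : 0 < R) (hd : 0 < d) (hν : 0 < ν) (i : ℕ) (hi : i < n)
    (hthr : pwtThr w p R d vmax ν (i + 1) ≤ pwtW w (Finset.Icc 1 i))
    (hpos : 0 < vmax - ν * pwtW w (Finset.Icc 1 (i + 1))) :
    pwtB w p R d vmax ν (Finset.Icc 1 (i + 1)) ≤ pwtB w p R d vmax ν (Finset.Icc 1 i) := by
  have hmem : i + 1 ∈ Finset.Icc 1 n := Finset.mem_Icc.mpr ⟨by omega, by omega⟩
  have hwi := hw _ hmem
  have hpi := hp _ hmem
  have hWsucc : pwtW w (Finset.Icc 1 (i + 1)) = pwtW w (Finset.Icc 1 i) + w (i + 1) :=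
    Finset.sum_Icc_succ_top (by omega) w
  have hPsucc : pwtP p (Finset.Icc 1 (i + 1)) = pwtP p (Finset.Icc 1 i) + p (i + 1) :=
    Finset.sum_Icc_succ_top (by omega) p
  set x := vmax - ν * pwtW w (Finset.Icc 1 i) with hx_def
  have hxa : 0 < x - ν * w (i + 1) := by
    rw [hWsucc] at hpos
    rw [hx_def]
    linarith
  have hxr : x ≤ ν * (w (i+1) / 2 * (1 + Real.sqrt (1 + 4 * R * d / (ν * w (i+1) * p (i+1))))) := by
    have h1 := mul_le_mul_of_nonneg_left hthr hν.le
    have h2 : ν * pwtThr w p R d vmax ν (i + 1)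
        = vmax - ν * (w (i+1) / 2 * (1 + Real.sqrt (1 + 4 * R * d / (ν * w (i+1) * p (i+1))))) := by
      unfold pwtThr
      field_simp
    rw [h2] at h1
    rw [hx_def]
    linarith
  have h2 := (pwt_key_s8 (w (i+1)) (p (i+1)) R d ν hwi hpi hR hd hν).2 x hxa hxr
  unfold pwtB
  rw [hWsucc, hPsucc]
  have h3 : vmax - ν * (pwtW w (Finset.Icc 1 i) + w (i + 1)) = x - ν * w (i + 1) := by
    rw [hx_def]; ring
  rw [h3]
  have h4 : R * d / (vmax - ν * pwtW w (Finset.Icc 1 i)) = R * d / x := by rw [hx_def]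
  rw [h4]
  linarith

/-- Monotonicity of the thresholds. -/
lemma pwt_thr_mono (n : ℕ) (w p : ℕ → ℝ) (R d vmax ν : ℝ)
    (hw : ∀ j ∈ Finset.Icc 1 n, 0 < w j) (hp : ∀ j ∈ Finset.Icc 1 n, 0 < p j)
    (hR : 0 < R) (hd : 0 < d) (hν : 0 < ν)
    (hpm : ∀ i j, 1 ≤ i → i < j → j ≤ n → p j < p i)
    (hwm : ∀ i j, 1 ≤ i → i < j → j ≤ n → w i < w j)
    (i j : ℕ) (h1 : 1 ≤ i) (hij : i ≤ j) (hjn : j ≤ n) :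
    pwtThr w p R d vmax ν j ≤ pwtThr w p R d vmax ν i := by
  rcases eq_or_lt_of_le hij with rfl | hij
  · exact le_rfl
  have hwi := hw i (Finset.mem_Icc.mpr ⟨h1, by omega⟩)
  have hwj := hw j (Finset.mem_Icc.mpr ⟨by omega, hjn⟩)
  have hpi := hp i (Finset.mem_Icc.mpr ⟨h1, by omega⟩)
  have hpj := hp j (Finset.mem_Icc.mpr ⟨by omega, hjn⟩)
  have hwij : w i ≤ w j := (hwm i j h1 hij hjn).le
  have hpji : p j ≤ p i := (hpm i j h1 hij hjn).le
  unfold pwtThr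
  have key : ∀ a b : ℝ, 0 < a → 0 < b →
      a / 2 * (1 + Real.sqrt (1 + 4 * R * d / (ν * a * b)))
        = a / 2 + Real.sqrt (a ^ 2 + 4 * R * d / ν * (a / b)) / 2 := by
    intro a b ha hb
    have h0 : a ^ 2 + 4 * R * d / ν * (a / b) = a ^ 2 * (1 + 4 * R * d / (ν * a * b)) := by
      field_simp
    rw [h0, Real.sqrt_mul (sq_nonneg a), Real.sqrt_sq ha.le]
    ring
  rw [key (w i) (p i) hwi hpi, key (w j) (p j) hwj hpj]
  have hsq : Real.sqrt (w i ^ 2 + 4 * R * d / ν * (w i / p i))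
      ≤ Real.sqrt (w j ^ 2 + 4 * R * d / ν * (w j / p j)) := by
    apply Real.sqrt_le_sqrt
    have hdiv : w i / p i ≤ w j / p j := div_le_div₀ hwj.le hwij hpj hpji
    have hsq2 : w i ^ 2 ≤ w j ^ 2 := by nlinarith
    have hcoef : 0 ≤ 4 * R * d / ν := by positivity
    nlinarith [mul_le_mul_of_nonneg_left hdiv hcoef]
  linarith

theorem pwt_prefix_is_optimal
    (n : ℕ) (w p : ℕ → ℝ) (R d vmin vmax C ν : ℝ)
    (hw : ∀ j ∈ Finset.Icc 1 n, 0 < w j) (hp : ∀ j ∈ Finset.Icc 1 n, 0 < p j)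
    (hR : 0 < R) (hd : 0 < d) (hvmin : 0 < vmin) (hv : vmin < vmax)
    (hC : 0 < C) (hν : ν = (vmax - vmin) / C)
    (hpm : ∀ i j, 1 ≤ i → i < j → j ≤ n → p j < p i)
    (hwm : ∀ i j, 1 ≤ i → i < j → j ≤ n → w i < w j)
    (hposn : 0 < vmax - ν * pwtW w (Finset.Icc 1 n))
    (o : ℕ) (ho : o < n)
    (hWo : pwtThr w p R d vmax ν (o + 1) ≤ pwtW w (Finset.Icc 1 o))
    (hleast : ∀ i < o, pwtW w (Finset.Icc 1 i) < pwtThr w p R d vmax ν (i + 1))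
    (k : ℕ) (hko : k ≤ o) (hkC : pwtW w (Finset.Icc 1 k) ≤ C)
    (hkmax : ∀ j, k < j → j ≤ o → C < pwtW w (Finset.Icc 1 j)) :
    ∀ s : Finset ℕ, s ⊆ Finset.Icc 1 n → pwtW w s ≤ C →
      pwtB w p R d vmax ν s ≤ pwtB w p R d vmax ν (Finset.Icc 1 k) := by
  intro s hs hsC
  have hν0 : 0 < ν := by
    have hvv : 0 < vmax - vmin := by linarith
    rw [hν]; positivity
  have hνC : ν * C = vmax - vmin := by rw [hν]; field_simp
  -- monotonicity of prefix weights
  have hWmono : ∀ i j : ℕ, i ≤ j → j ≤ n →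
      pwtW w (Finset.Icc 1 i) ≤ pwtW w (Finset.Icc 1 j) := by
    intro i j hij hjn
    apply Finset.sum_le_sum_of_subset_of_nonneg (Finset.Icc_subset_Icc_right hij)
    intro t ht _
    have ht' : t ∈ Finset.Icc 1 n := Finset.Icc_subset_Icc_right hjn ht
    exact (hw t ht').le
  set m := s.card with hm
  have hmn : m ≤ n := by
    have := Finset.card_le_card hs
    simpa using this
  -- compare s with the prefix of the same size
  have hWs : pwtW w (Finset.Icc 1 m) ≤ pwtW w s := by
    have := pwt_sum_prefix_le n w (fun i j h1 hij hjn => by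
      rcases eq_or_lt_of_le hij with rfl | h
      · exact le_rfl
      · exact (hwm i j h1 h hjn).le) s hs
    simpa [pwtW, hm] using this
  have hPs : pwtP p s ≤ pwtP p (Finset.Icc 1 m) := by
    have := pwt_sum_prefix_le n (fun t => -p t) (fun i j h1 hij hjn => by
      rcases eq_or_lt_of_le hij with rfl | h
      · exact le_rfl
      · exact neg_le_neg (hpm i j h1 h hjn).le) s hs
    unfold pwtP
    rw [Finset.sum_neg_distrib, Finset.sum_neg_distrib] at this
    rw [hm]
    linarith [this]
  have hWmC : pwtW w (Finset.Icc 1 m) ≤ C := le_trans hWs hsC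
  have hfeas : ∀ W' : ℝ, W' ≤ C → vmin ≤ vmax - ν * W' := by
    intro W' h
    have := mul_le_mul_of_nonneg_left h hν0.le
    linarith
  have hBs : pwtB w p R d vmax ν s ≤ pwtB w p R d vmax ν (Finset.Icc 1 m) := by
    unfold pwtB
    have hds : vmin ≤ vmax - ν * pwtW w s := hfeas _ hsC
    have hdm : vmax - ν * pwtW w s ≤ vmax - ν * pwtW w (Finset.Icc 1 m) := by
      have := mul_le_mul_of_nonneg_left hWs hν0.le
      linarith
    have hdiv : R * d / (vmax - ν * pwtW w (Finset.Icc 1 m)) ≤ R * d / (vmax - ν * pwtW w s) :=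
      div_le_div_of_nonneg_left (by positivity) (by linarith) hdm
    linarith
  -- now compare the prefix of size m with the prefix of size k
  have hBmk : pwtB w p R d vmax ν (Finset.Icc 1 m) ≤ pwtB w p R d vmax ν (Finset.Icc 1 k) := by
    rcases le_or_gt m k with hmk | hkm
    · -- climb up from m to k using step A
      have hchain : ∀ t, m ≤ t → t ≤ k →
          pwtB w p R d vmax ν (Finset.Icc 1 m) ≤ pwtB w p R d vmax ν (Finset.Icc 1 t) := by
        intro t
        induction t with
        | zero => intro h1 h2; have hm0 : m = 0 := (by omega); exact le_of_eq (by rw [hm0])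
        | succ t ih =>
          intro h1 h2
          rcases eq_or_lt_of_le h1 with h1e | h1'
          · rw [h1e]
          · have h3 := ih (by omega) (by omega)
            have h4 : t < o := by omega
            have h5 := pwt_stepA n w p R d vmax ν hw hp hR hd hν0 t (by omega)
              (hleast t h4).le
            linarith
      exact hchain k hmk le_rfl
    · -- then k = o and we descend from m to o using step B
      have hom : o < m := by
        by_contra h
        push_neg at h
        exact absurd hWmC (not_le.mpr (hkmax m hkm h))
      have hkeq : k = o := by
        by_contra h
        have hk1 : k + 1 ≤ o := by omega
        have := hkmax (k + 1) (by omega) hk1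
        have h2 : pwtW w (Finset.Icc 1 (k+1)) ≤ pwtW w (Finset.Icc 1 m) :=
          hWmono (k+1) m (by omega) hmn
        linarith
      subst hkeq
      have hchain : ∀ t, k ≤ t → t ≤ m →
          pwtB w p R d vmax ν (Finset.Icc 1 t) ≤ pwtB w p R d vmax ν (Finset.Icc 1 k) := by
        intro t
        induction t with
        | zero => intro h1 h2; have hk0 : k = 0 := (by omega); exact le_of_eq (by rw [hk0])
        | succ t ih =>
          intro h1 h2
          rcases eq_or_lt_of_le h1 with h1e | h1'
          · rw [← h1e]
          · have h3 := ih (by omega) (by omega)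
            have hthr : pwtThr w p R d vmax ν (t + 1) ≤ pwtW w (Finset.Icc 1 t) := by
              have ha := pwt_thr_mono n w p R d vmax ν hw hp hR hd hν0 hpm hwm
                (k + 1) (t + 1) (by omega) (by omega) (by omega)
              have hb := hWmono k t (by omega) (by omega)
              linarith
            have hpos : 0 < vmax - ν * pwtW w (Finset.Icc 1 (t + 1)) := by
              have h4 : pwtW w (Finset.Icc 1 (t + 1)) ≤ pwtW w (Finset.Icc 1 m) :=
                hWmono (t+1) m (by omega) hmn
              have := hfeas (pwtW w (Finset.Icc 1 (t+1))) (by linarith)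
              linarith
            have h5 := pwt_stepB n w p R d vmax ν hw hp hR hd hν0 t (by omega) hthr hpos
            linarith
      exact hchain m (by omega) le_rfl
  linarith
end

section
/- Assume v_max − ν·W(s_n) > 0 and that there exists an index i ∈ {0, ..., n−1} with W(s_i) ≥ w_{e_{i+1}}; let o be the least such index, and let k be the greatest index j ≤ o with W(s_j) ≤ C. Then the set {s_0, s_1, ..., s_k} is the Pareto front with respect to simultaneously minimizing W and maximizing B over feasible solutions: (a) for every solution s with W(s) ≤ C there exists i ≤ k with W(s_i) ≤ W(s) and B(s_i) ≥ B(s), and (b) for all 0 ≤ i < j ≤ k, W(s_i) < W(s_j) and B(s_i) < B(s_j), so no two of s_0, ..., s_k dominate each other. -/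
/-!
Adding item `i` to a solution of weight `W` changes the benefit by
`p_i - (R d / (A - ν w_i) - R d / A)`, where `A = v_max - ν W` is the travel speed. This is
positive exactly when `A` exceeds the larger root of `p_i A (A - ν w_i) = R d ν w_i`, which is
`v_max - ν w_{e_i}`; so the step pays off iff `W < w_{e_i}`. Heavier, less profitable items have
smaller thresholds, hence the prefix benefits rise strictly up to `s_o` and fall after it.
Any solution `s` is dominated by the prefix with `|s|` items, which is lighter and more
profitable. If `|s| > k`, feasibility of `s` forces `k = o`, and `s_o` dominates `s_{|s|}`.
-/

open Finset

theorem sum_Icc_card_le_sum_of_monotoneOn {M : Type*} [AddCommMonoid M] [PartialOrder M]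
    [IsOrderedAddMonoid M] {f : ℕ → M} {n : ℕ} (hf : MonotoneOn f (Set.Icc 1 n))
    {s : Finset ℕ} (hs : s ⊆ Icc 1 n) : ∑ i ∈ Icc 1 #s, f i ≤ ∑ i ∈ s, f i := by
  induction n generalizing s with
  | zero => simp [subset_empty.1 hs]
  | succ n ih =>
    have hf' : MonotoneOn f (Set.Icc 1 n) := hf.mono (Set.Icc_subset_Icc_right n.le_succ)
    by_cases hn : n + 1 ∈ s
    · have ht : s.erase (n + 1) ⊆ Icc 1 n := fun x hx => by
        have := hs (mem_of_mem_erase hx)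
        simp only [mem_Icc, mem_erase] at hx this ⊢
        omega
      have htn : #(s.erase (n + 1)) ≤ n := by simpa using card_le_card ht
      rw [← card_erase_add_one hn, ← insert_Icc_right_eq_Icc_add_one (by omega),
        sum_insert (by simp), ← add_sum_erase s f hn]
      exact add_le_add (hf ⟨by omega, by omega⟩ ⟨by omega, le_rfl⟩ (by omega)) (ih hf' ht)
    · exact ih hf' fun x hx => by
        have := hs hx
        simp only [mem_Icc] at this ⊢
        exact ⟨this.1, Nat.lt_succ_iff.1 (this.2.lt_of_ne (ne_of_mem_of_not_mem hx hn))⟩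

theorem sum_le_sum_Icc_card_of_antitoneOn {M : Type*} [AddCommMonoid M] [PartialOrder M]
    [IsOrderedAddMonoid M] {f : ℕ → M} {n : ℕ} (hf : AntitoneOn f (Set.Icc 1 n))
    {s : Finset ℕ} (hs : s ⊆ Icc 1 n) : ∑ i ∈ s, f i ≤ ∑ i ∈ Icc 1 #s, f i :=
  sum_Icc_card_le_sum_of_monotoneOn (M := Mᵒᵈ) hf.dual_right hs

/-- The larger root in `A` of `p * A * (A - a) = c * a`. With `c = R d`, `a = ν w_i`, `p = p_i`,
adding item `i` at speed `A` increases the benefit iff `A` exceeds it. -/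
noncomputable def breakEvenSpeed (c a p : ℝ) : ℝ := a / 2 + √((a / 2) ^ 2 + a * c / p)

theorem div_sub_div_lt_iff_breakEvenSpeed_lt {c a p A : ℝ} (ha : 0 < a) (hp : 0 < p)
    (hA : a < A) : c / (A - a) - c / A < p ↔ breakEvenSpeed c a p < A := by
  have hA0 : 0 < A := ha.trans hA
  have hAa : 0 < A - a := sub_pos.2 hA
  have hcost : c / (A - a) - c / A = a * c / (A * (A - a)) := by field_simp; ring
  rw [hcost, div_lt_iff₀ (by positivity), breakEvenSpeed, ← lt_sub_iff_add_lt',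
    Real.sqrt_lt' (by linarith), ← lt_sub_iff_add_lt', div_lt_iff₀ hp,
    show (A - a / 2) ^ 2 - (a / 2) ^ 2 = A * (A - a) by ring, mul_comm _ p]

theorem breakEvenSpeed_le_breakEvenSpeed {c a a' p p' : ℝ} (hc : 0 ≤ c) (ha : 0 ≤ a)
    (hp' : 0 < p') (haa' : a ≤ a') (hpp' : p' ≤ p) :
    breakEvenSpeed c a p ≤ breakEvenSpeed c a' p' := by
  have : 0 ≤ a' := ha.trans haa'
  unfold breakEvenSpeed
  gcongr

theorem mul_pwtThr {w p : ℕ → ℝ} {R d vmax ν : ℝ} {i : ℕ} (hν : 0 < ν) (hw : 0 < w i)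
    (hp : p i ≠ 0) :
    ν * pwtThr w p R d vmax ν i = vmax - breakEvenSpeed (R * d) (ν * w i) (p i) := by
  have hνw : 0 < ν * w i := mul_pos hν hw
  have hrad : (ν * w i / 2) ^ 2 + ν * w i * (R * d) / p i
      = (ν * w i / 2) ^ 2 * (1 + 4 * R * d / (ν * w i * p i)) := by
    field_simp; ring
  rw [pwtThr, breakEvenSpeed, hrad, Real.sqrt_mul (by positivity), Real.sqrt_sq (by positivity)]
  field_simp

theorem pwtB_lt_pwtB_insert_iff {w p : ℕ → ℝ} {R d vmax ν : ℝ} {s : Finset ℕ} {i : ℕ}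
    (hi : i ∉ s) (hν : 0 < ν) (hw : 0 < w i) (hp : 0 < p i)
    (hpos : 0 < vmax - ν * pwtW w (insert i s)) :
    pwtB w p R d vmax ν s < pwtB w p R d vmax ν (insert i s) ↔
      pwtW w s < pwtThr w p R d vmax ν i := by
  have hWi : pwtW w (insert i s) = pwtW w s + w i := by
    rw [pwtW, sum_insert hi, add_comm]; rfl
  have hPi : pwtP p (insert i s) = pwtP p s + p i := by
    rw [pwtP, sum_insert hi, add_comm]; rfl
  have hspeed : vmax - ν * pwtW w (insert i s) = (vmax - ν * pwtW w s) - ν * w i := by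
    rw [hWi]; ring
  rw [hspeed] at hpos
  calc pwtB w p R d vmax ν s < pwtB w p R d vmax ν (insert i s)
      ↔ R * d / ((vmax - ν * pwtW w s) - ν * w i) - R * d / (vmax - ν * pwtW w s) < p i := by
        rw [pwtB, pwtB, hPi, hspeed]
        constructor <;> intro h <;> linarith
    _ ↔ breakEvenSpeed (R * d) (ν * w i) (p i) < vmax - ν * pwtW w s :=
        div_sub_div_lt_iff_breakEvenSpeed_lt (mul_pos hν hw) hp (by linarith)
    _ ↔ ν * pwtW w s < ν * pwtThr w p R d vmax ν i := by
        rw [mul_pwtThr hν hw hp.ne', lt_sub_comm]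
    _ ↔ pwtW w s < pwtThr w p R d vmax ν i := mul_lt_mul_iff_right₀ hν

theorem pwtThr_le_pwtThr {w p : ℕ → ℝ} {R d vmax ν : ℝ} {i j : ℕ} (hRd : 0 ≤ R * d)
    (hν : 0 < ν) (hwi : 0 < w i) (hpj : 0 < p j) (hw : w i ≤ w j) (hp : p j ≤ p i) :
    pwtThr w p R d vmax ν j ≤ pwtThr w p R d vmax ν i := by
  rw [← mul_le_mul_iff_right₀ hν, mul_pwtThr hν (hwi.trans_le hw) hpj.ne',
    mul_pwtThr hν hwi (hpj.trans_le hp).ne', sub_le_sub_iff_left]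
  exact breakEvenSpeed_le_breakEvenSpeed hRd (mul_pos hν hwi).le hpj
    (mul_le_mul_of_nonneg_left hw hν.le) hp

theorem pwtB_le_pwtB {w p : ℕ → ℝ} {R d vmax ν : ℝ} {s t : Finset ℕ} (hRd : 0 ≤ R * d)
    (hν : 0 ≤ ν) (hW : pwtW w t ≤ pwtW w s) (hP : pwtP p s ≤ pwtP p t)
    (hpos : 0 < vmax - ν * pwtW w s) : pwtB w p R d vmax ν s ≤ pwtB w p R d vmax ν t := by
  have hspeed : vmax - ν * pwtW w s ≤ vmax - ν * pwtW w t := by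
    have := mul_le_mul_of_nonneg_left hW hν
    linarith
  exact sub_le_sub hP (div_le_div_of_nonneg_left hRd hpos hspeed)

theorem pwtW_Icc_lt_pwtW_Icc {w : ℕ → ℝ} {n i j : ℕ} (hw : ∀ l ∈ Icc 1 n, 0 < w l)
    (hij : i < j) (hjn : j ≤ n) : pwtW w (Icc 1 i) < pwtW w (Icc 1 j) :=
  sum_lt_sum_of_subset (Icc_subset_Icc_right hij.le) (i := j) (by simp; omega) (by simp; omega)
    (hw j (by simp; omega)) fun l hl _ => (hw l (Icc_subset_Icc_right hjn hl)).le

theorem pwtW_Icc_le_pwtW_Icc {w : ℕ → ℝ} {n i j : ℕ} (hw : ∀ l ∈ Icc 1 n, 0 < w l)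
    (hij : i ≤ j) (hjn : j ≤ n) : pwtW w (Icc 1 i) ≤ pwtW w (Icc 1 j) :=
  sum_le_sum_of_subset_of_nonneg (Icc_subset_Icc_right hij) fun l hl _ =>
    (hw l (Icc_subset_Icc_right hjn hl)).le

theorem sub_mul_pwtW_pos_of_subset {w : ℕ → ℝ} {vmax ν : ℝ} {n : ℕ} {s : Finset ℕ}
    (hw : ∀ j ∈ Icc 1 n, 0 < w j) (hν : 0 ≤ ν) (hposn : 0 < vmax - ν * pwtW w (Icc 1 n))
    (hs : s ⊆ Icc 1 n) : 0 < vmax - ν * pwtW w s := by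
  have : pwtW w s ≤ pwtW w (Icc 1 n) :=
    sum_le_sum_of_subset_of_nonneg hs fun l hl _ => (hw l hl).le
  linarith [mul_le_mul_of_nonneg_left this hν]

theorem pwtB_Icc_lt_pwtB_Icc_add_one_iff {w p : ℕ → ℝ} {R d vmax ν : ℝ} {n j : ℕ}
    (hw : ∀ j ∈ Icc 1 n, 0 < w j) (hp : ∀ j ∈ Icc 1 n, 0 < p j) (hν : 0 < ν)
    (hposn : 0 < vmax - ν * pwtW w (Icc 1 n)) (hj : j < n) :
    pwtB w p R d vmax ν (Icc 1 j) < pwtB w p R d vmax ν (Icc 1 (j + 1)) ↔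
      pwtW w (Icc 1 j) < pwtThr w p R d vmax ν (j + 1) := by
  have hjn : j + 1 ∈ Icc 1 n := mem_Icc.2 ⟨by omega, hj⟩
  rw [← insert_Icc_right_eq_Icc_add_one (by omega)]
  refine pwtB_lt_pwtB_insert_iff (by simp) hν (hw _ hjn) (hp _ hjn)
    (sub_mul_pwtW_pos_of_subset hw hν.le hposn ?_)
  rw [insert_Icc_right_eq_Icc_add_one (by omega)]
  exact Icc_subset_Icc_right hj

theorem strictMonoOn_pwtB_Icc {w p : ℕ → ℝ} {R d vmax ν : ℝ} {n o : ℕ}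
    (hw : ∀ j ∈ Icc 1 n, 0 < w j) (hp : ∀ j ∈ Icc 1 n, 0 < p j) (hν : 0 < ν)
    (hposn : 0 < vmax - ν * pwtW w (Icc 1 n)) (hon : o ≤ n)
    (hleast : ∀ i < o, pwtW w (Icc 1 i) < pwtThr w p R d vmax ν (i + 1)) :
    StrictMonoOn (fun j => pwtB w p R d vmax ν (Icc 1 j)) (Set.Iic o) :=
  strictMonoOn_of_lt_add_one Set.ordConnected_Iic fun j _ _ hj => by
    rw [Set.mem_Iic] at hj
    exact (pwtB_Icc_lt_pwtB_Icc_add_one_iff hw hp hν hposn (by omega)).2 (hleast j hj)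

theorem antitoneOn_pwtB_Icc {w p : ℕ → ℝ} {R d vmax ν : ℝ} {n o : ℕ}
    (hw : ∀ j ∈ Icc 1 n, 0 < w j) (hp : ∀ j ∈ Icc 1 n, 0 < p j) (hRd : 0 ≤ R * d)
    (hν : 0 < ν) (hposn : 0 < vmax - ν * pwtW w (Icc 1 n))
    (hw_mono : MonotoneOn w (Set.Icc 1 n)) (hp_anti : AntitoneOn p (Set.Icc 1 n))
    (hWo : pwtThr w p R d vmax ν (o + 1) ≤ pwtW w (Icc 1 o)) :
    AntitoneOn (fun j => pwtB w p R d vmax ν (Icc 1 j)) (Set.Icc o n) :=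
  antitoneOn_of_add_one_le Set.ordConnected_Icc fun j _ hj hj1 => by
    simp only [Set.mem_Icc] at hj hj1
    have ho1 : o + 1 ∈ Set.Icc 1 n := ⟨by omega, by omega⟩
    have hj1' : j + 1 ∈ Set.Icc 1 n := ⟨by omega, hj1.2⟩
    refine not_lt.1 fun h =>
      ((pwtB_Icc_lt_pwtB_Icc_add_one_iff hw hp hν hposn (by omega)).1 h).not_ge ?_
    calc pwtThr w p R d vmax ν (j + 1) ≤ pwtThr w p R d vmax ν (o + 1) :=
          pwtThr_le_pwtThr hRd hν (hw _ (mem_Icc.2 ho1)) (hp _ (mem_Icc.2 hj1'))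
            (hw_mono ho1 hj1' (by omega)) (hp_anti ho1 hj1' (by omega))
      _ ≤ pwtW w (Icc 1 o) := hWo
      _ ≤ pwtW w (Icc 1 j) := pwtW_Icc_le_pwtW_Icc hw hj.1 hj.2

theorem pwt_prefixes_are_pareto_front_general
    (n : ℕ) (w p : ℕ → ℝ) (R d vmin vmax C ν : ℝ)
    (hw : ∀ j ∈ Finset.Icc 1 n, 0 < w j) (hp : ∀ j ∈ Finset.Icc 1 n, 0 < p j)
    (hR : 0 < R) (hd : 0 < d) (hv : vmin < vmax)
    (hC : 0 < C) (hν : ν = (vmax - vmin) / C)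
    (hpm : ∀ i j, 1 ≤ i → i < j → j ≤ n → p j < p i)
    (hwm : ∀ i j, 1 ≤ i → i < j → j ≤ n → w i < w j)
    (hposn : 0 < vmax - ν * pwtW w (Finset.Icc 1 n))
    (o : ℕ) (ho : o < n)
    (hWo : pwtThr w p R d vmax ν (o + 1) ≤ pwtW w (Finset.Icc 1 o))
    (hleast : ∀ i < o, pwtW w (Finset.Icc 1 i) < pwtThr w p R d vmax ν (i + 1))
    (k : ℕ) (hko : k ≤ o)
    (hkmax : ∀ j, k < j → j ≤ o → C < pwtW w (Finset.Icc 1 j)) :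
    (∀ s : Finset ℕ, s ⊆ Finset.Icc 1 n → pwtW w s ≤ C →
      ∃ i ≤ k, pwtW w (Finset.Icc 1 i) ≤ pwtW w s ∧
        pwtB w p R d vmax ν s ≤ pwtB w p R d vmax ν (Finset.Icc 1 i)) ∧
    (∀ i j, i < j → j ≤ k →
      pwtW w (Finset.Icc 1 i) < pwtW w (Finset.Icc 1 j) ∧
      pwtB w p R d vmax ν (Finset.Icc 1 i) < pwtB w p R d vmax ν (Finset.Icc 1 j)) := by
  have hν0 : 0 < ν := hν ▸ div_pos (sub_pos.2 hv) hC
  have hRd : 0 ≤ R * d := (mul_pos hR hd).le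
  have hw_mono : MonotoneOn w (Set.Icc 1 n) :=
    StrictMonoOn.monotoneOn fun i hi j hj hij => hwm i j hi.1 hij hj.2
  have hp_anti : AntitoneOn p (Set.Icc 1 n) :=
    StrictAntiOn.antitoneOn fun i hi j hj hij => hpm i j hi.1 hij hj.2
  have hrise := strictMonoOn_pwtB_Icc hw hp hν0 hposn ho.le hleast
  have hfall := antitoneOn_pwtB_Icc hw hp hRd hν0 hposn hw_mono hp_anti hWo
  refine ⟨fun s hs hsC => ?_, fun i j hij hjk =>
    ⟨pwtW_Icc_lt_pwtW_Icc hw hij (by omega), hrise (by simp; omega) (by simp; omega) hij⟩⟩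
  have hsn : #s ≤ n := by simpa using card_le_card hs
  have hWs : pwtW w (Icc 1 #s) ≤ pwtW w s := sum_Icc_card_le_sum_of_monotoneOn hw_mono hs
  have hBs : pwtB w p R d vmax ν s ≤ pwtB w p R d vmax ν (Icc 1 #s) :=
    pwtB_le_pwtB hRd hν0.le hWs (sum_le_sum_Icc_card_of_antitoneOn hp_anti hs)
      (sub_mul_pwtW_pos_of_subset hw hν0.le hposn hs)
  rcases le_or_gt #s k with hsk | hks
  · exact ⟨#s, hsk, hWs, hBs⟩
  obtain rfl : k = o := hko.eq_or_lt.resolve_right fun hko' => by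
    linarith [hkmax (k + 1) k.lt_succ_self hko', pwtW_Icc_le_pwtW_Icc hw hks hsn]
  exact ⟨k, le_rfl, (pwtW_Icc_le_pwtW_Icc hw hks.le hsn).trans hWs,
    hBs.trans (hfall (by simp; omega) (by simp; omega) hks.le)⟩

theorem pwt_prefixes_are_pareto_front
    (n : ℕ) (w p : ℕ → ℝ) (R d vmin vmax C ν : ℝ)
    (hw : ∀ j ∈ Finset.Icc 1 n, 0 < w j) (hp : ∀ j ∈ Finset.Icc 1 n, 0 < p j)
    (hR : 0 < R) (hd : 0 < d) (hvmin : 0 < vmin) (hv : vmin < vmax)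
    (hC : 0 < C) (hν : ν = (vmax - vmin) / C)
    (hpm : ∀ i j, 1 ≤ i → i < j → j ≤ n → p j < p i)
    (hwm : ∀ i j, 1 ≤ i → i < j → j ≤ n → w i < w j)
    (hposn : 0 < vmax - ν * pwtW w (Finset.Icc 1 n))
    (o : ℕ) (ho : o < n)
    (hWo : pwtThr w p R d vmax ν (o + 1) ≤ pwtW w (Finset.Icc 1 o))
    (hleast : ∀ i < o, pwtW w (Finset.Icc 1 i) < pwtThr w p R d vmax ν (i + 1))
    (k : ℕ) (hko : k ≤ o) (hkC : pwtW w (Finset.Icc 1 k) ≤ C)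
    (hkmax : ∀ j, k < j → j ≤ o → C < pwtW w (Finset.Icc 1 j)) :
    (∀ s : Finset ℕ, s ⊆ Finset.Icc 1 n → pwtW w s ≤ C →
      ∃ i ≤ k, pwtW w (Finset.Icc 1 i) ≤ pwtW w s ∧
        pwtB w p R d vmax ν s ≤ pwtB w p R d vmax ν (Finset.Icc 1 i)) ∧
    (∀ i j, i < j → j ≤ k →
      pwtW w (Finset.Icc 1 i) < pwtW w (Finset.Icc 1 j) ∧
      pwtB w p R d vmax ν (Finset.Icc 1 i) < pwtB w p R d vmax ν (Finset.Icc 1 j)) :=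
  pwt_prefixes_are_pareto_front_general n w p R d vmin vmax C ν hw hp hR hd hv hC hν hpm hwm hposn o
    ho hWo hleast k hko hkmax
end

section
/- Let h < x be two indices, and let s be a solution not containing item x with v_max − ν·(W(s) + w_x) > 0. If adding item x does not decrease the benefit, i.e. B(s ∪ {x}) ≥ B(s), then W(s ∪ {x}) = W(s) + w_x < w_{e_h} + w_h; in particular, removing item h from any solution of weight W(s ∪ {x}) cannot increase the benefit. -/
lemma pwt_thr_iff (w p b R d ν : ℝ) (hw : 0 < w) (hp : 0 < p) (hν : 0 < ν)
    (hR : 0 < R) (hd : 0 < d) (hb : 0 < b) :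
    ν * w / 2 * (Real.sqrt (1 + 4 * R * d / (ν * w * p)) - 1) ≤ b ↔
    R * d * (ν * w) ≤ p * b * (b + ν * w) := by
  have hE : (0:ℝ) ≤ 1 + 4 * R * d / (ν * w * p) := by positivity
  set sq := Real.sqrt (1 + 4 * R * d / (ν * w * p)) with hsq
  have hs0 : 0 ≤ sq := Real.sqrt_nonneg _
  have hs2 : ν * w * p * sq ^ 2 = ν * w * p + 4 * R * d := by
    rw [hsq, Real.sq_sqrt hE]; field_simp
  have hνw : 0 < ν * w := by positivity
  constructor
  · intro hle
    have h1 : ν * w * sq ≤ 2 * b + ν * w := by nlinarith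
    have h2 : (ν * w * sq) ^ 2 ≤ (2 * b + ν * w) ^ 2 := by nlinarith [mul_nonneg hνw.le hs0]
    nlinarith [mul_pos hνw hp, sq_nonneg sq]
  · intro hle
    have h2 : (ν * w * sq) ^ 2 ≤ (2 * b + ν * w) ^ 2 := by nlinarith
    have h1 : ν * w * sq ≤ 2 * b + ν * w := by nlinarith [mul_nonneg hνw.le hs0]
    nlinarith

lemma pwt_mono (w1 w2 p1 p2 c : ℝ) (hw1 : 0 < w1) (hw12 : w1 < w2)
    (hp2 : 0 < p2) (hp12 : p2 < p1) (hc : 0 < c) :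
    w1 / 2 * (Real.sqrt (1 + c / (w1 * p1)) - 1) <
    w2 / 2 * (Real.sqrt (1 + c / (w2 * p2)) - 1) := by
  have hw2 : 0 < w2 := hw1.trans hw12
  have hp1 : 0 < p1 := hp2.trans hp12
  set k := c / p2 with hk
  have hk0 : 0 < k := by positivity
  have hstep : Real.sqrt (1 + c / (w1 * p1)) ≤ Real.sqrt (1 + k / w1) := by
    apply Real.sqrt_le_sqrt
    have h0 : c / (w1 * p1) ≤ c / (w1 * p2) := by
      apply div_le_div_of_nonneg_left hc.le (by positivity)
      nlinarith
    have h1 : c / (w1 * p2) = k / w1 := by rw [hk, div_div, mul_comm w1 p2]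
    linarith
  have key : w1 / 2 * (Real.sqrt (1 + k / w1) - 1) <
      w2 / 2 * (Real.sqrt (1 + k / w2) - 1) := by
    set s1 := Real.sqrt (1 + k / w1) with hs1
    set s2 := Real.sqrt (1 + k / w2) with hs2
    have h10 : 0 ≤ s1 := Real.sqrt_nonneg _
    have h20 : 0 ≤ s2 := Real.sqrt_nonneg _
    have h1sq : w1 * s1 ^ 2 = w1 + k := by
      rw [hs1, Real.sq_sqrt (by positivity)]; field_simp
    have h2sq : w2 * s2 ^ 2 = w2 + k := by
      rw [hs2, Real.sq_sqrt (by positivity)]; field_simp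
    have hu2 : (w1 * s1) ^ 2 = w1 ^ 2 + k * w1 := by nlinarith
    have hv2 : (w2 * s2) ^ 2 = w2 ^ 2 + k * w2 := by nlinarith
    have hu : w1 * s1 < w1 + k / 2 := by
      nlinarith [mul_nonneg hw1.le h10]
    have hlt : (w1 * s1 + (w2 - w1)) ^ 2 < (w2 * s2) ^ 2 := by nlinarith
    have hfin : w1 * s1 + (w2 - w1) < w2 * s2 := by
      nlinarith [mul_nonneg hw1.le h10, mul_nonneg hw2.le h20]
    linarith
  have heq : (1 : ℝ) + k / w2 = 1 + c / (w2 * p2) := by rw [hk, div_div, mul_comm p2 w2]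
  rw [heq] at key
  nlinarith [key, hstep]

set_option maxHeartbeats 1000000 in
theorem pwt_accepted_insertion_weight_below_removal_threshold
    (n : ℕ) (w p : ℕ → ℝ) (R d vmin vmax C ν : ℝ)
    (hw : ∀ j ∈ Finset.Icc 1 n, 0 < w j) (hp : ∀ j ∈ Finset.Icc 1 n, 0 < p j)
    (hR : 0 < R) (hd : 0 < d) (hvmin : 0 < vmin) (hv : vmin < vmax)
    (hC : 0 < C) (hν : ν = (vmax - vmin) / C)
    (hpm : ∀ i j, 1 ≤ i → i < j → j ≤ n → p j < p i)
    (hwm : ∀ i j, 1 ≤ i → i < j → j ≤ n → w i < w j)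
    (h x : ℕ) (hh : h ∈ Finset.Icc 1 n) (hx : x ∈ Finset.Icc 1 n) (hhx : h < x)
    (s : Finset ℕ) (hs : s ⊆ Finset.Icc 1 n) (hxs : x ∉ s)
    (hpos : 0 < vmax - ν * (pwtW w s + w x))
    (hB : pwtB w p R d vmax ν s ≤ pwtB w p R d vmax ν (insert x s)) :
    pwtW w s + w x < pwtThr w p R d vmax ν h + w h ∧
    (∀ t : Finset ℕ, t ⊆ Finset.Icc 1 n → h ∈ t →
      pwtW w t = pwtW w s + w x →
      pwtB w p R d vmax ν (t.erase h) ≤ pwtB w p R d vmax ν t) := by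
  have hx1 : 1 ≤ x := (Finset.mem_Icc.mp hx).1
  have hxn : x ≤ n := (Finset.mem_Icc.mp hx).2
  have hh1 : 1 ≤ h := (Finset.mem_Icc.mp hh).1
  have hwx : 0 < w x := hw x hx
  have hpx : 0 < p x := hp x hx
  have hwh : 0 < w h := hw h hh
  have hph : 0 < p h := hp h hh
  have hwhx : w h < w x := hwm h x hh1 hhx hxn
  have hphx : p x < p h := hpm h x hh1 hhx hxn
  have hν0 : 0 < ν := by rw [hν]; exact div_pos (by linarith) hC
  set W := pwtW w s with hW
  set b := vmax - ν * (W + w x) with hbdef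
  have hb0 : 0 < b := hpos
  clear_value W b
  have ha0 : 0 < b + ν * w x := by positivity
  -- from hB extract the profit inequality
  have h1 : R * d / b - R * d / (b + ν * w x) ≤ p x := by
    unfold pwtB pwtP pwtW at hB
    rw [Finset.sum_insert hxs, Finset.sum_insert hxs] at hB
    have e1 : vmax - ν * (w x + ∑ i ∈ s, w i) = b := by rw [hbdef, hW]; unfold pwtW; ring
    have e2 : vmax - ν * ∑ i ∈ s, w i = b + ν * w x := by rw [hbdef, hW]; unfold pwtW; ring
    rw [e1, e2] at hB
    linarith
  have h2 : R * d * (ν * w x) ≤ p x * b * (b + ν * w x) := by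
    have hdiff : R * d / b - R * d / (b + ν * w x)
        = R * d * (ν * w x) / (b * (b + ν * w x)) := by
      field_simp [hb0.ne', ha0.ne']; ring
    rw [hdiff] at h1
    rw [div_le_iff₀ (by positivity)] at h1
    nlinarith [h1]
  have hthr : ν * w x / 2 * (Real.sqrt (1 + 4 * R * d / (ν * w x * p x)) - 1) ≤ b :=
    (pwt_thr_iff (w x) (p x) b R d ν hwx hpx hν0 hR hd hb0).mpr h2
  -- ν * thr identity
  have hthrid : ∀ i : ℕ, ν * pwtThr w p R d vmax ν i
      = vmax - ν * w i / 2 * (1 + Real.sqrt (1 + 4 * R * d / (ν * w i * p i))) := by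
    intro i
    unfold pwtThr
    field_simp
  -- part 1: W + w x ≤ thr x + w x
  have hle1 : W + w x ≤ pwtThr w p R d vmax ν x + w x := by
    have key : ν * (W + w x) ≤ ν * (pwtThr w p R d vmax ν x + w x) := by
      linarith [hthr, hthrid x, hbdef]
    exact le_of_mul_le_mul_left key hν0
  -- strict monotonicity of thr i + w i
  have hmono : pwtThr w p R d vmax ν x + w x < pwtThr w p R d vmax ν h + w h := by
    have hc : (0:ℝ) < 4 * R * d / ν := by positivity
    have hm := pwt_mono (w h) (w x) (p h) (p x) (4 * R * d / ν) hwh hwhx hpx hphx hc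
    have eh : 4 * R * d / ν / (w h * p h) = 4 * R * d / (ν * w h * p h) := by
      rw [div_div]; ring_nf
    have ex : 4 * R * d / ν / (w x * p x) = 4 * R * d / (ν * w x * p x) := by
      rw [div_div]; ring_nf
    rw [eh, ex] at hm
    unfold pwtThr
    nlinarith [hm]
  have hpart1 : W + w x < pwtThr w p R d vmax ν h + w h := lt_of_le_of_lt hle1 hmono
  refine ⟨hpart1, ?_⟩
  intro t ht hht hWt
  -- derive the threshold inequality for h at weight W + w x
  have hthrh : ν * w h / 2 * (Real.sqrt (1 + 4 * R * d / (ν * w h * p h)) - 1) ≤ b := by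
    have key : ν * (W + w x) < ν * (pwtThr w p R d vmax ν h + w h) :=
      (mul_lt_mul_iff_right₀ hν0).mpr hpart1
    linarith [key, hthrid h, hbdef]
  have h2h : R * d * (ν * w h) ≤ p h * b * (b + ν * w h) :=
    (pwt_thr_iff (w h) (p h) b R d ν hwh hph hν0 hR hd hb0).mp hthrh
  have hErase : pwtP p (t.erase h) + p h = pwtP p t := Finset.sum_erase_add t p hht
  have hEraseW : pwtW w (t.erase h) + w h = pwtW w t := Finset.sum_erase_add t w hht
  have hbt : vmax - ν * pwtW w (t.erase h) = b + ν * w h := by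
    have e : pwtW w (t.erase h) = W + w x - w h := by linarith [hEraseW, hWt]
    rw [e, hbdef]; ring
  have hbt2 : vmax - ν * pwtW w t = b := by rw [hWt, hbdef]
  unfold pwtB
  rw [hbt, hbt2, ← hErase]
  have hkey : R * d / b - R * d / (b + ν * w h) ≤ p h := by
    have hah : 0 < b + ν * w h := by positivity
    have hdiff : R * d / b - R * d / (b + ν * w h)
        = R * d * (ν * w h) / (b * (b + ν * w h)) := by
      field_simp [hb0.ne', hah.ne']; ring
    rw [hdiff, div_le_iff₀ (by positivity : (0:ℝ) < b * (b + ν * w h))]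
    exact h2h.trans_eq (by ring)
  linarith
end

section
/- Let m be an index and s a solution with W(s) ≥ w_{e_m} + w_m and v_max − ν·W(s) > 0. Then for every index j ≥ m: (a) if j ∈ s, then B(s \ {j}) ≥ B(s) (removing any item of index at least m does not decrease the benefit); and (b) if j ∉ s and v_max − ν·(W(s) + w_j) > 0, then B(s ∪ {j}) ≤ B(s) (adding any item of index at least m does not increase the benefit). -/
lemma pwt_core (R d ν wm pm wj pj x : ℝ)
    (hR : 0 < R) (hd : 0 < d) (hν : 0 < ν) (hwm : 0 < wm) (hpm0 : 0 < pm)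
    (hwj : wm ≤ wj) (hpj0 : 0 < pj) (hpj : pj ≤ pm) (hx : 0 < x)
    (hxa : x ≤ ν * wm / 2 * (Real.sqrt (1 + 4 * R * d / (ν * wm * pm)) - 1)) :
    x * (x + ν * wj) * pj ≤ R * d * (ν * wj) := by
  set S := Real.sqrt (1 + 4 * R * d / (ν * wm * pm)) with hSdef
  have hT : 0 < 4 * R * d / (ν * wm * pm) := by positivity
  have hS2 : S ^ 2 = 1 + 4 * R * d / (ν * wm * pm) := Real.sq_sqrt (by positivity)
  have hSnn : 0 ≤ S := Real.sqrt_nonneg _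
  have hS1 : 1 < S := by nlinarith
  set a := ν * wm / 2 * (S - 1) with hadef
  have ha0 : 0 < a := by
    have : 0 < S - 1 := by linarith
    positivity
  have key : a * (a + ν * wm) * pm = ν * wm * (R * d) := by
    have h1 : a * (a + ν * wm) = (ν * wm) ^ 2 / 4 * (S ^ 2 - 1) := by
      rw [hadef]; ring
    rw [h1, hS2]
    field_simp
    ring
  have h2 : a * pm ≤ R * d := by nlinarith [mul_pos hν hwm, sq_nonneg a]
  have g2 : a * (a + ν * wj) * pm ≤ R * d * (ν * wj) := by
    nlinarith [mul_nonneg (sub_nonneg.mpr h2) (mul_nonneg hν.le (sub_nonneg.mpr hwj))]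
  have hwj0 : 0 < wj := lt_of_lt_of_le hwm hwj
  have g1 : x * (x + ν * wj) ≤ a * (a + ν * wj) := by nlinarith [mul_pos hν hwj0]
  have g3 : x * (x + ν * wj) * pj ≤ a * (a + ν * wj) * pj :=
    mul_le_mul_of_nonneg_right g1 hpj0.le
  have g4 : a * (a + ν * wj) * pj ≤ a * (a + ν * wj) * pm := by
    have hnn : 0 ≤ a * (a + ν * wj) := by nlinarith [mul_pos hν hwj0]
    exact mul_le_mul_of_nonneg_left hpj hnn
  linarith

theorem pwt_heavy_solution_remove_add_tail
    (n : ℕ) (w p : ℕ → ℝ) (R d vmin vmax C ν : ℝ)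
    (hw : ∀ j ∈ Finset.Icc 1 n, 0 < w j) (hp : ∀ j ∈ Finset.Icc 1 n, 0 < p j)
    (hR : 0 < R) (hd : 0 < d) (hvmin : 0 < vmin) (hv : vmin < vmax)
    (hC : 0 < C) (hν : ν = (vmax - vmin) / C)
    (hpm : ∀ i j, 1 ≤ i → i ≤ j → j ≤ n → p j ≤ p i)
    (hwm : ∀ i j, 1 ≤ i → i ≤ j → j ≤ n → w i ≤ w j)
    (m : ℕ) (hm : m ∈ Finset.Icc 1 n)
    (s : Finset ℕ) (hs : s ⊆ Finset.Icc 1 n)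
    (hW : pwtThr w p R d vmax ν m + w m ≤ pwtW w s)
    (hpos : 0 < vmax - ν * pwtW w s) :
    ∀ j ∈ Finset.Icc 1 n, m ≤ j →
      (j ∈ s → pwtB w p R d vmax ν s ≤ pwtB w p R d vmax ν (s.erase j)) ∧
      (j ∉ s → 0 < vmax - ν * (pwtW w s + w j) →
        pwtB w p R d vmax ν (insert j s) ≤ pwtB w p R d vmax ν s) := by
  have hν0 : 0 < ν := by rw [hν]; exact div_pos (by linarith) hC
  have hwm0 : 0 < w m := hw m hm
  have hpm0 : 0 < p m := hp m hm
  obtain ⟨hm1, hmn⟩ := Finset.mem_Icc.mp hm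
  -- upper bound on vmax - ν * W
  have hThr : ν * pwtThr w p R d vmax ν m
      = vmax - ν * (w m / 2 * (1 + Real.sqrt (1 + 4 * R * d / (ν * w m * p m)))) := by
    unfold pwtThr
    rw [mul_sub, mul_div_cancel₀ _ (ne_of_gt hν0)]
  have key : vmax - ν * pwtW w s
      ≤ ν * w m / 2 * (Real.sqrt (1 + 4 * R * d / (ν * w m * p m)) - 1) := by
    have h2 : ν * (pwtThr w p R d vmax ν m + w m) ≤ ν * pwtW w s :=
      mul_le_mul_of_nonneg_left hW hν0.le
    have h4 : ν * w m / 2 * (Real.sqrt (1 + 4 * R * d / (ν * w m * p m)) - 1)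
        = ν * (w m / 2 * (1 + Real.sqrt (1 + 4 * R * d / (ν * w m * p m)))) - ν * w m := by
      ring
    rw [mul_add] at h2
    linarith
  intro j hj hmj
  obtain ⟨hj1, hjn⟩ := Finset.mem_Icc.mp hj
  have hwj0 : 0 < w j := hw j hj
  have hpj0 : 0 < p j := hp j hj
  have hwmj : w m ≤ w j := hwm m j hm1 hmj hjn
  have hpjm : p j ≤ p m := hpm m j hm1 hmj hjn
  constructor
  · intro hjs
    have hWe : pwtW w (s.erase j) = pwtW w s - w j := Finset.sum_erase_eq_sub hjs
    have hPe : pwtP p (s.erase j) = pwtP p s - p j := Finset.sum_erase_eq_sub hjs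
    have hcore := pwt_core R d ν (w m) (p m) (w j) (p j) (vmax - ν * pwtW w s)
      hR hd hν0 hwm0 hpm0 hwmj hpj0 hpjm hpos key
    unfold pwtB
    rw [hWe, hPe]
    have hx : vmax - ν * (pwtW w s - w j) = (vmax - ν * pwtW w s) + ν * w j := by ring
    rw [hx]
    set a := vmax - ν * pwtW w s with hadef
    have hd2 : 0 < a + ν * w j := by nlinarith [mul_pos hν0 hwj0]
    have hdiff : R * d / a - R * d / (a + ν * w j)
        = R * d * (ν * w j) / (a * (a + ν * w j)) := by
      field_simp
      ring
    have hstep : p j ≤ R * d / a - R * d / (a + ν * w j) := by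
      rw [hdiff, le_div_iff₀ (by positivity)]
      linarith [hcore]
    linarith
  · intro hjs hpos2
    have hWe : pwtW w (insert j s) = w j + pwtW w s := Finset.sum_insert hjs
    have hPe : pwtP p (insert j s) = p j + pwtP p s := Finset.sum_insert hjs
    have hx0 : 0 < vmax - ν * pwtW w s - ν * w j := by linarith [hpos2]; 
    have hxa : vmax - ν * pwtW w s - ν * w j
        ≤ ν * w m / 2 * (Real.sqrt (1 + 4 * R * d / (ν * w m * p m)) - 1) := by
      nlinarith [mul_pos hν0 hwj0]
    have hcore := pwt_core R d ν (w m) (p m) (w j) (p j) (vmax - ν * pwtW w s - ν * w j)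
      hR hd hν0 hwm0 hpm0 hwmj hpj0 hpjm hx0 hxa
    unfold pwtB
    rw [hWe, hPe]
    have hx : vmax - ν * (w j + pwtW w s) = (vmax - ν * pwtW w s - ν * w j) := by ring
    rw [hx]
    set b := vmax - ν * pwtW w s - ν * w j with hbdef
    have hab : vmax - ν * pwtW w s = b + ν * w j := by rw [hbdef]; ring
    rw [hab]
    have hd2 : 0 < b + ν * w j := by rw [← hab]; exact hpos
    have hdiff : R * d / b - R * d / (b + ν * w j)
        = R * d * (ν * w j) / (b * (b + ν * w j)) := by
      field_simp
      ring
    have hstep : p j ≤ R * d / b - R * d / (b + ν * w j) := by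
      rw [hdiff, le_div_iff₀ (by positivity)]
      linarith [hcore]
    linarith
end

section
/- Let 1 ≤ i ≤ n and let s be a solution with W(s_{i−1}) < W(s) ≤ W(s_i). Then s contains at least one item of index j ≥ i, and for any such j, removing it gives W(s \ {j}) ≤ W(s_{i−1}), i.e. the removal moves the solution to a strictly lower weight level. -/
theorem pwt_weight_level_removal
    (n : ℕ) (w : ℕ → ℝ) (vmin vmax C ν : ℝ)
    (hw : ∀ j ∈ Finset.Icc 1 n, 0 < w j)
    (hvmin : 0 < vmin) (hv : vmin < vmax)
    (hC : 0 < C) (hν : ν = (vmax - vmin) / C)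
    (hwm : ∀ i j, 1 ≤ i → i ≤ j → j ≤ n → w i ≤ w j)
    (i : ℕ) (hi1 : 1 ≤ i) (hin : i ≤ n)
    (s : Finset ℕ) (hs : s ⊆ Finset.Icc 1 n)
    (hlow : pwtW w (Finset.Icc 1 (i - 1)) < pwtW w s)
    (hhigh : pwtW w s ≤ pwtW w (Finset.Icc 1 i)) :
    (∃ j ∈ s, i ≤ j) ∧
    (∀ j ∈ s, i ≤ j → pwtW w (s.erase j) ≤ pwtW w (Finset.Icc 1 (i - 1))) := by

  have key : pwtW w (Finset.Icc 1 i) = pwtW w (Finset.Icc 1 (i - 1)) + w i := by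
    obtain ⟨k, rfl⟩ := Nat.exists_eq_add_of_le hi1
    rw [add_comm 1 k]
    simp only [pwtW, Nat.add_sub_cancel]
    exact Finset.sum_Icc_succ_top (Nat.le_add_left 1 k) w
  constructor
  · by_contra hcon
    push_neg at hcon
    have hsub : s ⊆ Finset.Icc 1 (i - 1) := by
      intro j hj
      have hj' := hs hj
      rw [Finset.mem_Icc] at hj' ⊢
      exact ⟨hj'.1, Nat.le_sub_one_of_lt (hcon j hj)⟩
    have : pwtW w s ≤ pwtW w (Finset.Icc 1 (i - 1)) := by
      apply Finset.sum_le_sum_of_subset_of_nonneg hsub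
      intro j hj _
      have : j ∈ Finset.Icc 1 n := by
        rw [Finset.mem_Icc] at hj ⊢
        exact ⟨hj.1, le_trans hj.2 (le_trans (Nat.sub_le i 1) hin)⟩
      exact (hw j this).le
    linarith
  · intro j hj hij
    have hjn : j ≤ n := (Finset.mem_Icc.mp (hs hj)).2
    have hwi : w i ≤ w j := hwm i j hi1 hij hjn
    have herase : pwtW w (s.erase j) = pwtW w s - w j := by
      simp [pwtW, Finset.sum_erase_eq_sub hj]
    rw [herase]
    linarith
end
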